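/- arXiv:1803.10618 — 5 statements merged into one kernel-verified Lean document; each statement's English description precedes it below -/
import Mathlib

section
/- Let x̄ ∈ ℝ^{nN}, define ȳ ∈ ℝ^{mN} by ȳ_i = A_i x̄_i − b_i for each i, and set σ̄ = M_n x̄. Then x̄ is a variational generalized aggregative equilibrium (v-GAE) of the aggregative game if and only if the triple (x̄, ȳ, σ̄) is a variational generalized Nash equilibrium (v-GNE) of the extended game. -/
noncomputable section

open Matrix Finset Filter

/-- A vector in `ℝ^k`. -/
abbrev Vec (k : ℕ) := Fin k → ℝ

/-- A block vector in `ℝ^{kN}` (N blocks of size k). -/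
abbrev VecN (N k : ℕ) := Fin N → Vec k

/-- Standard inner product on `ℝ^k`. -/
def dot {k : ℕ} (u v : Vec k) : ℝ := ∑ j, u j * v j

/-- Standard inner product on `ℝ^{kN}`. -/
def dotN {N k : ℕ} (u v : VecN N k) : ℝ := ∑ i, dot (u i) (v i)

/-- Subdifferential of `g : ℝ^p → ℝ` at `x`. -/
def subdiff {p : ℕ} (g : Vec p → ℝ) (x : Vec p) : Set (Vec p) :=
  {v | ∀ z, g x + dot v (z - x) ≤ g z}

/-- Normal cone of `S ⊆ ℝ^p` at `x` (empty if `x ∉ S`). -/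
def normalCone {p : ℕ} (S : Set (Vec p)) (x : Vec p) : Set (Vec p) :=
  {v | x ∈ S ∧ ∀ z ∈ S, dot v (z - x) ≤ 0}

/-- The nonnegative orthant `ℝ^m_{≥0}`. -/
def orthant (m : ℕ) : Set (Vec m) := {v | ∀ j, 0 ≤ v j}

/-- Euclidean projection onto the nonnegative orthant. -/
def projPos {m : ℕ} (v : Vec m) : Vec m := fun j => max (v j) 0

/-- `M x = (1/N) Σ_i x_i` (the averaging map `M_n`, resp. its `m`-dim analogue). -/
def Mavg {N k : ℕ} (x : VecN N k) : Vec k := (N : ℝ)⁻¹ • ∑ i, x i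

/-- `P y = Σ_i y_i`. -/
def Psum {N k : ℕ} (y : VecN N k) : Vec k := ∑ i, y i

/-- `Mᵀ μ` : transpose of the averaging map. -/
def MavgT (N : ℕ) {k : ℕ} (μ : Vec k) : VecN N k := fun _ => (N : ℝ)⁻¹ • μ

/-- `Pᵀ λ` : transpose of the summing map. -/
def PsumT (N : ℕ) {k : ℕ} (l : Vec k) : VecN N k := fun _ => l

/-- Monotonicity of a set-valued map w.r.t. an inner product `ip`. -/
def MonoOn {V : Type} [AddCommGroup V] (ip : V → V → ℝ) (F : V → Set V) : Prop :=
  ∀ ω ω' u v, u ∈ F ω → v ∈ F ω' → 0 ≤ ip (u - v) (ω - ω')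

/-- Maximal monotonicity of a set-valued map w.r.t. an inner product `ip`. -/
def MaxMonoOn {V : Type} [AddCommGroup V] (ip : V → V → ℝ) (F : V → Set V) : Prop :=
  MonoOn ip F ∧ ∀ ω u, (∀ ω' v, v ∈ F ω' → 0 ≤ ip (u - v) (ω - ω')) → u ∈ F ω

/-- `A x = Σ_i A_i x_i` for `A = [A_1 ⋯ A_N]`. -/
def bigA {N n m : ℕ} (A : Fin N → Matrix (Fin m) (Fin n) ℝ) (x : VecN N n) : Vec m :=
  ∑ i, (A i).mulVec (x i)

/-- The collective feasible set `𝒳 = (∏_i Ω_i) ∩ {x : A x ≤ b}`. -/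
def Xfeas {N n m : ℕ} (Ω : Fin N → Set (Vec n)) (A : Fin N → Matrix (Fin m) (Fin n) ℝ)
    (b : Fin N → Vec m) : Set (VecN N n) :=
  {x | (∀ i, x i ∈ Ω i) ∧ ∀ j, bigA A x j ≤ (∑ i, b i) j}

/-- Extended pseudo-subdifferential `F_e(x, σ)`. -/
def Fe {N n : ℕ} (f : Fin N → Vec n → Vec n → ℝ) (x : VecN N n) (σ : Vec n) :
    Set (VecN N n) :=
  {g | ∀ i, g i ∈ subdiff (fun z => f i z σ) (x i)}

/-- Aggregative pseudo-subdifferential `F_a(x) = F_e(x, M_n x)`. -/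
def Fa {N n : ℕ} (f : Fin N → Vec n → Vec n → ℝ) (x : VecN N n) : Set (VecN N n) :=
  Fe f x (Mavg x)

/-- `x̄` is a variational generalized aggregative equilibrium (v-GAE):
it solves GVI(𝒳, F_a). -/
def isVGAE {N n m : ℕ} (Ω : Fin N → Set (Vec n)) (f : Fin N → Vec n → Vec n → ℝ)
    (A : Fin N → Matrix (Fin m) (Fin n) ℝ) (b : Fin N → Vec m) (xbar : VecN N n) : Prop :=
  xbar ∈ Xfeas Ω A b ∧ ∃ g ∈ Fa f xbar, ∀ x ∈ Xfeas Ω A b, 0 ≤ dotN g (x - xbar)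

/-- The local constraint set `C = {(x,y) : x_i ∈ Ω_i, y_i = A_i x_i - b_i}`. -/
def Cset {N n m : ℕ} (Ω : Fin N → Set (Vec n)) (A : Fin N → Matrix (Fin m) (Fin n) ℝ)
    (b : Fin N → Vec m) : Set (VecN N n × VecN N m) :=
  {p | ∀ i, p.1 i ∈ Ω i ∧ p.2 i = (A i).mulVec (p.1 i) - b i}

/-- Inner product on `ℝ^{nN} × ℝ^{mN}`. -/
def ip2 {N n m : ℕ} (p q : VecN N n × VecN N m) : ℝ := dotN p.1 q.1 + dotN p.2 q.2

/-- Normal cone in `ℝ^{nN} × ℝ^{mN}` (empty outside the set). -/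
def nconeC {N n m : ℕ} (C : Set (VecN N n × VecN N m)) (p : VecN N n × VecN N m) :
    Set (VecN N n × VecN N m) :=
  {v | p ∈ C ∧ ∀ q ∈ C, ip2 v (q - p) ≤ 0}

/-- Inner product on `ℝ^{nN} × ℝ^{mN} × ℝ^n`. -/
def ip3 {N n m : ℕ} (p q : VecN N n × VecN N m × Vec n) : ℝ :=
  dotN p.1 q.1 + dotN p.2.1 q.2.1 + dot p.2.2 q.2.2

/-- Coupling constraint set `𝒱` of the extended game. -/
def Vfeas (N n m : ℕ) : Set (VecN N n × VecN N m × Vec n) :=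
  {w | (∀ j, Psum w.2.1 j ≤ 0) ∧ w.2.2 = Mavg w.1}

/-- The operator `𝒰(x,y,σ) = {(g + u, w, 0) : g ∈ F_e(x,σ), (u,w) ∈ N_C(x,y)}`. -/
def Uop {N n m : ℕ} (Ω : Fin N → Set (Vec n)) (f : Fin N → Vec n → Vec n → ℝ)
    (A : Fin N → Matrix (Fin m) (Fin n) ℝ) (b : Fin N → Vec m)
    (x : VecN N n) (y : VecN N m) (σ : Vec n) : Set (VecN N n × VecN N m × Vec n) :=
  {h | ∃ g ∈ Fe f x σ, ∃ uw ∈ nconeC (Cset Ω A b) (x, y), h = (g + uw.1, uw.2, 0)}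

/-- `(x,y,σ)` is a v-GNE of the extended game: it solves GVI(𝒱, 𝒰). -/
def isVGNEext {N n m : ℕ} (Ω : Fin N → Set (Vec n)) (f : Fin N → Vec n → Vec n → ℝ)
    (A : Fin N → Matrix (Fin m) (Fin n) ℝ) (b : Fin N → Vec m)
    (x : VecN N n) (y : VecN N m) (σ : Vec n) : Prop :=
  (x, y, σ) ∈ Vfeas N n m ∧
    ∃ h ∈ Uop Ω f A b x y σ, ∀ w ∈ Vfeas N n m, 0 ≤ ip3 h (w - (x, y, σ))

/-!
Forward direction: a v-GAE `x̄` with certificate `g` minimises `⟨g, · - x̄⟩` over `𝒳`. Separating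
the open negative orthant of `ℝ × ℝ^m` from the upper image of `x ↦ (⟨g, x - x̄⟩, A x - b)` on
`∏ Ωᵢ`, Slater's condition gives a Lagrange multiplier `μ ≥ 0` for `A x ≤ b`. Then
`(-g, -Pᵀμ)` is normal to `C` at `(x̄, ȳ)`, and `(0, -Pᵀμ, 0) ∈ 𝒰(x̄, ȳ, σ̄)` solves the variational
inequality over `𝒱` by complementary slackness `⟨μ, A x̄ - b⟩ = 0`.

Backward direction: for `x ∈ 𝒳` with residuals `yₓ`, subtract the normal-cone inequality at
`(x, yₓ)` from the extended variational inequality at `(x, yₓ, Mₙ x) ∈ 𝒱`; what remains is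
`⟨g, x - x̄⟩ ≥ 0`.
-/

lemma nonneg_of_forall_le_add_mul {a b c : ℝ} (h : ∀ t : ℝ, 0 ≤ t → a ≤ b + t * c) : 0 ≤ c := by
  by_contra! hc
  have key : (b - a + 1) / -c * c = -(b - a + 1) := by field_simp [hc.ne]
  have := h ((b - a + 1) / -c) (div_nonneg (by linarith [h 0 le_rfl]) (by linarith))
  linarith

lemma ContinuousLinearMap.apply_prod_pi {ι : Type*} [Fintype ι] [DecidableEq ι]
    (φ : (ℝ × (ι → ℝ)) →L[ℝ] ℝ) (r : ℝ) (s : ι → ℝ) :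
    φ (r, s) = r * φ (1, 0) + ∑ j, s j * φ (0, Pi.single j 1) := by
  have hs := LinearMap.pi_apply_eq_sum_univ (φ.toLinearMap ∘ₗ LinearMap.inr ℝ ℝ (ι → ℝ)) s
  have hr : φ (r, 0) = r * φ (1, 0) := by simpa using φ.map_smul r ((1 : ℝ), (0 : ι → ℝ))
  have hsplit : ((r, s) : ℝ × (ι → ℝ)) = (r, 0) + (0, s) := by simp
  simp only [LinearMap.coe_comp, ContinuousLinearMap.coe_coe, Function.comp_apply,
    LinearMap.inr_apply, smul_eq_mul] at hs
  rw [hsplit, map_add, hr, hs]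
  congr 1
  refine Finset.sum_congr rfl fun j _ => ?_
  congr 3
  ext k
  simp [Pi.single_apply, eq_comm]

section Slater

variable {E ι : Type*} [AddCommGroup E] [Module ℝ E] {S : Set E} {F : E → ℝ} {G : E → ι → ℝ}

lemma convex_setOf_exists_prod_le (hF : ConvexOn ℝ S F) (hG : ∀ j, ConvexOn ℝ S fun x => G x j) :
    Convex ℝ {p : ℝ × (ι → ℝ) | ∃ x ∈ S, (F x, G x) ≤ p} := by
  rintro p ⟨x, hx, hxp⟩ q ⟨y, hy, hyq⟩ a c ha hc hac
  refine ⟨a • x + c • y, hF.1 hx hy ha hc hac, ?_, fun j => ?_⟩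
  · calc F (a • x + c • y) ≤ a • F x + c • F y := hF.2 hx hy ha hc hac
      _ ≤ (a • p + c • q).1 := by
        simp only [Prod.fst_add, Prod.smul_fst]
        gcongr
        exacts [hxp.1, hyq.1]
  · calc G (a • x + c • y) j ≤ a • G x j + c • G y j := (hG j).2 hx hy ha hc hac
      _ ≤ (a • p + c • q).2 j := by
        simp only [Prod.snd_add, Prod.smul_snd, Pi.add_apply, Pi.smul_apply]
        gcongr
        exacts [hxp.2 j, hyq.2 j]

lemma exists_separating_functional_of_slater [Fintype ι] (hF : ConvexOn ℝ S F)
    (hG : ∀ j, ConvexOn ℝ S fun x => G x j) (hslater : ∃ x₀ ∈ S, ∀ j, G x₀ j < 0)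
    (hmin : ∀ x ∈ S, (∀ j, G x j ≤ 0) → 0 ≤ F x) :
    ∃ φ : StrongDual ℝ (ℝ × (ι → ℝ)),
      (∀ d, 0 ≤ d → 0 ≤ φ d) ∧ 0 < φ (1, 0) ∧ ∀ x ∈ S, 0 ≤ φ (F x, G x) := by
  classical
  obtain ⟨x₀, hx₀, hGx₀⟩ := hslater
  set O : Set (ℝ × (ι → ℝ)) := Set.Iio 0 ×ˢ Set.univ.pi fun _ => Set.Iio 0
  set K : Set (ℝ × (ι → ℝ)) := {p | ∃ x ∈ S, (F x, G x) ≤ p}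
  have hdisj : Disjoint O K := by
    refine Set.disjoint_left.2 fun p ⟨hp₁, hp₂⟩ ⟨x, hx, hxp⟩ => ?_
    have hfeas : ∀ j, G x j ≤ 0 := fun j => (hxp.2 j).trans (hp₂ j trivial).le
    exact absurd (hmin x hx hfeas) (not_le.2 (hxp.1.trans_lt hp₁))
  obtain ⟨φ, u, hφO, hφK⟩ := geometric_hahn_banach_open
    ((convex_Iio 0).prod (convex_pi fun _ _ => convex_Iio 0))
    (isOpen_Iio.prod (isOpen_set_pi Set.finite_univ fun _ _ => isOpen_Iio))
    (convex_setOf_exists_prod_le hF hG) hdisj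
  have hu : 0 ≤ u := by
    have h0 : (0 : ℝ × (ι → ℝ)) ∈ closure O := by
      rw [closure_prod_eq, closure_pi_set, closure_Iio' Set.nonempty_Iio]
      exact ⟨Set.self_mem_Iic, fun _ _ => Set.self_mem_Iic⟩
    simpa using closure_minimal (t := {p | φ p ≤ u}) (fun p hp => (hφO p hp).le)
      (isClosed_le φ.continuous continuous_const) h0
  have hφ_nonneg : ∀ d, 0 ≤ d → 0 ≤ φ d := fun d hd =>
    nonneg_of_forall_le_add_mul fun t ht => by
      simpa using hφK ((F x₀, G x₀) + t • d) ⟨x₀, hx₀, le_add_of_nonneg_right (smul_nonneg ht hd)⟩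
  refine ⟨φ, hφ_nonneg, ?_, fun x hx => hu.trans (hφK _ ⟨x, hx, le_rfl⟩)⟩
  -- if `φ (1, 0) = 0`, then `φ` cannot tell `(-1, G x₀) ∈ O` from `(F x₀, G x₀) ∈ K`
  refine (hφ_nonneg (1, 0) (Prod.le_def.2 ⟨zero_le_one, le_rfl⟩)).lt_of_ne' fun hφ₁ => ?_
  have hO : ((-1, G x₀) : ℝ × (ι → ℝ)) ∈ O := ⟨Set.mem_Iio.2 neg_one_lt_zero, fun j _ => hGx₀ j⟩
  have := (hφO _ hO).trans_le (hφK (F x₀, G x₀) ⟨x₀, hx₀, le_rfl⟩)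
  rw [φ.apply_prod_pi (-1), φ.apply_prod_pi (F x₀), hφ₁, mul_zero, mul_zero] at this
  exact this.false

theorem exists_lagrange_multipliers_of_slater [Fintype ι] (hF : ConvexOn ℝ S F)
    (hG : ∀ j, ConvexOn ℝ S fun x => G x j) (hslater : ∃ x₀ ∈ S, ∀ j, G x₀ j < 0)
    (hmin : ∀ x ∈ S, (∀ j, G x j ≤ 0) → 0 ≤ F x) :
    ∃ μ : ι → ℝ, (∀ j, 0 ≤ μ j) ∧ ∀ x ∈ S, 0 ≤ F x + ∑ j, μ j * G x j := by
  classical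
  obtain ⟨φ, hφ_nonneg, hφ₁, hφS⟩ := exists_separating_functional_of_slater hF hG hslater hmin
  refine ⟨fun j => φ (0, Pi.single j 1) / φ (1, 0), fun j => div_nonneg
    (hφ_nonneg _ (Prod.le_def.2 ⟨le_rfl, Pi.single_nonneg.2 zero_le_one⟩)) hφ₁.le, fun x hx => ?_⟩
  have := div_nonneg (hφS x hx) hφ₁.le
  rw [φ.apply_prod_pi, add_div, Finset.sum_div, mul_div_cancel_right₀ _ hφ₁.ne'] at this
  refine this.trans_eq (congrArg _ (Finset.sum_congr rfl fun j _ => ?_))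
  ring

end Slater

section Game

variable {N n m k : ℕ}

@[simp] lemma dot_zero_left (v : Vec k) : dot 0 v = 0 := by simp [dot]

lemma dot_nonpos_of_nonneg_of_nonpos {μ v : Vec k} (hμ : ∀ j, 0 ≤ μ j) (hv : ∀ j, v j ≤ 0) :
    dot μ v ≤ 0 :=
  Finset.sum_nonpos fun j _ => mul_nonpos_of_nonneg_of_nonpos (hμ j) (hv j)

lemma dotN_add_left (u v w : VecN N k) : dotN (u + v) w = dotN u w + dotN v w := by
  simp [dotN, dot, add_mul, Finset.sum_add_distrib]

lemma dotN_neg_left (u w : VecN N k) : dotN (-u) w = -dotN u w := by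
  simp [dotN, dot]

@[simp] lemma dotN_zero_left (w : VecN N k) : dotN 0 w = 0 := by simp [dotN]

@[simp] lemma dotN_zero_right (u : VecN N k) : dotN u 0 = 0 := by simp [dotN, dot]

lemma dotN_add_right (u v w : VecN N k) : dotN u (v + w) = dotN u v + dotN u w := by
  simp [dotN, dot, mul_add, Finset.sum_add_distrib]

lemma dotN_smul_right (u : VecN N k) (a : ℝ) (v : VecN N k) : dotN u (a • v) = a • dotN u v := by
  simp [dotN, dot, Finset.mul_sum, mul_left_comm]

lemma dotN_sub_right (u v w : VecN N k) : dotN u (v - w) = dotN u v - dotN u w := by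
  simp [dotN, dot, mul_sub, Finset.sum_sub_distrib]

lemma dotN_PsumT_left (l : Vec k) (y : VecN N k) : dotN (PsumT N l) y = dot l (Psum y) := by
  simp only [dotN, dot, PsumT, Psum, Finset.sum_apply, Finset.mul_sum]
  exact Finset.sum_comm

lemma convexOn_dotN_sub {S : Set (VecN N k)} (hS : Convex ℝ S) (g x₀ : VecN N k) :
    ConvexOn ℝ S fun x => dotN g (x - x₀) := by
  have hlin : IsLinearMap ℝ (dotN g) := ⟨dotN_add_right g, dotN_smul_right g⟩
  refine (((hlin.mk' _).convexOn hS).add_const (-dotN g x₀)).congr fun x _ => ?_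
  simp [dotN_sub_right, ← sub_eq_add_neg]

lemma convexOn_bigA_sub_apply {S : Set (VecN N n)} (hS : Convex ℝ S)
    (A : Fin N → Matrix (Fin m) (Fin n) ℝ) (c : Vec m) (j : Fin m) :
    ConvexOn ℝ S fun x => (bigA A x - c) j := by
  have hlin : IsLinearMap ℝ fun x => bigA A x j :=
    ⟨fun x y => by simp [bigA, mulVec_add, Finset.sum_add_distrib],
     fun a x => by simp [bigA, mulVec_smul, Finset.mul_sum]⟩
  refine (((hlin.mk' _).convexOn hS).add_const (-c j)).congr fun x _ => ?_
  simp [← sub_eq_add_neg]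

def constraintResidual (A : Fin N → Matrix (Fin m) (Fin n) ℝ) (b : Fin N → Vec m) (x : VecN N n) :
    VecN N m :=
  fun i => (A i).mulVec (x i) - b i

lemma Psum_constraintResidual (A : Fin N → Matrix (Fin m) (Fin n) ℝ) (b : Fin N → Vec m)
    (x : VecN N n) : Psum (constraintResidual A b x) = bigA A x - ∑ i, b i := by
  simp [Psum, constraintResidual, bigA, Finset.sum_sub_distrib]

lemma mem_Cset_iff {Ω : Fin N → Set (Vec n)} {A : Fin N → Matrix (Fin m) (Fin n) ℝ}
    {b : Fin N → Vec m} {q : VecN N n × VecN N m} :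
    q ∈ Cset Ω A b ↔ (∀ i, q.1 i ∈ Ω i) ∧ q.2 = constraintResidual A b q.1 :=
  ⟨fun h => ⟨fun i => (h i).1, funext fun i => (h i).2⟩,
   fun ⟨hΩ, hy⟩ i => ⟨hΩ i, congrFun hy i⟩⟩

end Game

section Equilibria

variable {N n m : ℕ} {Ω : Fin N → Set (Vec n)} {f : Fin N → Vec n → Vec n → ℝ}
  {A : Fin N → Matrix (Fin m) (Fin n) ℝ} {b : Fin N → Vec m} {xbar : VecN N n}

lemma exists_multipliers_of_forall_dotN_nonneg (hΩcv : ∀ i, Convex ℝ (Ω i))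
    (slater : ∃ x0 : VecN N n, (∀ i, x0 i ∈ Ω i) ∧ ∀ j, bigA A x0 j < (∑ i, b i) j)
    {g : VecN N n} (hg : ∀ x ∈ Xfeas Ω A b, 0 ≤ dotN g (x - xbar)) :
    ∃ μ : Vec m, (∀ j, 0 ≤ μ j) ∧
      ∀ x, (∀ i, x i ∈ Ω i) → 0 ≤ dotN g (x - xbar) + dot μ (bigA A x - ∑ i, b i) := by
  have hS : Convex ℝ (Set.univ.pi Ω) := convex_pi fun i _ => hΩcv i
  obtain ⟨x0, hx0Ω, hx0⟩ := slater
  obtain ⟨μ, hμ, hL⟩ := exists_lagrange_multipliers_of_slater (convexOn_dotN_sub hS g xbar)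
    (convexOn_bigA_sub_apply hS A (∑ i, b i))
    ⟨x0, fun i _ => hx0Ω i, fun j => sub_neg.2 (hx0 j)⟩
    fun x hx hfeas => hg x ⟨fun i => hx i trivial, fun j => sub_nonpos.1 (hfeas j)⟩
  exact ⟨μ, hμ, fun x hx => hL x fun i _ => hx i⟩

lemma isVGNEext_of_isVGAE (hΩcv : ∀ i, Convex ℝ (Ω i))
    (slater : ∃ x0 : VecN N n, (∀ i, x0 i ∈ Ω i) ∧ ∀ j, bigA A x0 j < (∑ i, b i) j)
    (h : isVGAE Ω f A b xbar) :
    isVGNEext Ω f A b xbar (constraintResidual A b xbar) (Mavg xbar) := by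
  obtain ⟨⟨hxΩ, hxA⟩, g, hg, hVI⟩ := h
  obtain ⟨μ, hμ, hL⟩ := exists_multipliers_of_forall_dotN_nonneg hΩcv slater hVI
  have hfeas : ∀ j, (bigA A xbar - ∑ i, b i) j ≤ 0 := fun j => sub_nonpos.2 (hxA j)
  have hslack : dot μ (bigA A xbar - ∑ i, b i) = 0 :=
    le_antisymm (dot_nonpos_of_nonneg_of_nonpos hμ hfeas) (by simpa using hL xbar hxΩ)
  refine ⟨⟨by rwa [Psum_constraintResidual], rfl⟩, (g + -g, -PsumT N μ, 0),
    ⟨g, hg, (-g, -PsumT N μ), ⟨mem_Cset_iff.2 ⟨hxΩ, rfl⟩, fun q hq => ?_⟩, rfl⟩, ?_⟩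
  · obtain ⟨hqΩ, hq⟩ := mem_Cset_iff.1 hq
    simp only [ip2, Prod.fst_sub, Prod.snd_sub, hq, dotN_neg_left, dotN_sub_right,
      dotN_PsumT_left, Psum_constraintResidual, hslack]
    linarith [hL q.1 hqΩ, dotN_sub_right g q.1 xbar]
  · rintro ⟨x, y, σ⟩ ⟨hy, -⟩
    simp only [ip3, Prod.fst_sub, Prod.snd_sub, add_neg_cancel, dotN_zero_left, dotN_neg_left,
      dotN_sub_right, dotN_PsumT_left, Psum_constraintResidual, hslack, dot_zero_left]
    linarith [dot_nonpos_of_nonneg_of_nonpos hμ hy]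

lemma isVGAE_of_isVGNEext
    (h : isVGNEext Ω f A b xbar (constraintResidual A b xbar) (Mavg xbar)) :
    isVGAE Ω f A b xbar := by
  obtain ⟨⟨hPsum, -⟩, _, ⟨g, hg, ⟨u, w⟩, ⟨hC, hN⟩, rfl⟩, hVI⟩ := h
  refine ⟨⟨(mem_Cset_iff.1 hC).1, fun j => ?_⟩, g, hg, fun x ⟨hx, hAx⟩ => ?_⟩
  · simpa [Psum_constraintResidual] using hPsum j
  · have hNx := hN (x, constraintResidual A b x) (mem_Cset_iff.2 ⟨hx, rfl⟩)
    have hVIx := hVI (x, constraintResidual A b x, Mavg x)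
      ⟨fun j => by simpa [Psum_constraintResidual] using hAx j, rfl⟩
    simp only [ip2, ip3, Prod.fst_sub, Prod.snd_sub, dot_zero_left, add_zero,
      dotN_add_left] at hNx hVIx
    linarith

end Equilibria

theorem stmt0_general {N n m : ℕ}
    (Ω : Fin N → Set (Vec n)) (f : Fin N → Vec n → Vec n → ℝ)
    (A : Fin N → Matrix (Fin m) (Fin n) ℝ) (b : Fin N → Vec m)
    (hΩcv : ∀ i, Convex ℝ (Ω i))
    (slater : ∃ x0 : VecN N n, (∀ i, x0 i ∈ Ω i) ∧ ∀ j, bigA A x0 j < (∑ i, b i) j)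
    (xbar : VecN N n) :
    isVGAE Ω f A b xbar ↔
      isVGNEext Ω f A b xbar (fun i => (A i).mulVec (xbar i) - b i) (Mavg xbar) :=
  ⟨isVGNEext_of_isVGAE hΩcv slater, isVGAE_of_isVGNEext⟩

/-- `x̄` is a v-GAE of the aggregative game iff `(x̄, ȳ, σ̄)`,
with `ȳ_i = A_i x̄_i - b_i` and `σ̄ = M_n x̄`, is a v-GNE of the extended game. -/
theorem stmt0 {N n m : ℕ} (hN : 0 < N) (hn : 0 < n) (hm : 0 < m)
    (Ω : Fin N → Set (Vec n)) (f : Fin N → Vec n → Vec n → ℝ)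
    (A : Fin N → Matrix (Fin m) (Fin n) ℝ) (b : Fin N → Vec m)
    (hΩne : ∀ i, (Ω i).Nonempty) (hΩcp : ∀ i, IsCompact (Ω i))
    (hΩcv : ∀ i, Convex ℝ (Ω i))
    (hfcont : ∀ i, Continuous (fun p : Vec n × Vec n => f i p.1 p.2))
    (hfconv : ∀ i w, ConvexOn ℝ Set.univ (fun z => f i z w))
    (slater : ∃ x0 : VecN N n, (∀ i, x0 i ∈ Ω i) ∧ ∀ j, bigA A x0 j < (∑ i, b i) j)
    (xbar : VecN N n) :
    isVGAE Ω f A b xbar ↔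
      isVGNEext Ω f A b xbar (fun i => (A i).mulVec (xbar i) - b i) (Mavg xbar) :=
  stmt0_general Ω f A b hΩcv slater xbar
end
end

section
/- Let ω = (x,y,σ,μ,λ) ∈ ℝ^d and ω⁺ = (x⁺,y⁺,σ⁺,μ⁺,λ⁺) ∈ ℝ^d. Then ω − ω⁺ ∈ ΓA(ω⁺) (where ΓA(ω') := {Γa : a ∈ A(ω')}) if and only if σ⁺ = σ, μ⁺ = μ, λ⁺ = λ and, for every i, x_i⁺ is the unique minimizer over v ∈ Ω_i of f_i(v, σ) + (1/(2γ_i))‖v − x_i‖² + (1/(2γ_i))‖A_i v − b_i − y_i‖², and y_i⁺ = A_i x_i⁺ − b_i. In particular, for every ω ∈ ℝ^d there is exactly one ω⁺ with ω − ω⁺ ∈ ΓA(ω⁺), i.e., the resolvent (Id + ΓA)^{-1} is single-valued with full domain. -/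
noncomputable section

open Matrix Finset Filter

/-- The extended space `ℝ^d = ℝ^{nN} × ℝ^{mN} × ℝ^n × ℝ^n × ℝ^m`. -/
abbrev St (N n m : ℕ) := VecN N n × VecN N m × Vec n × Vec n × Vec m

/-- Inner product on the extended space. -/
def ipS {N n m : ℕ} (u v : St N n m) : ℝ :=
  dotN u.1 v.1 + dotN u.2.1 v.2.1 + dot u.2.2.1 v.2.2.1 + dot u.2.2.2.1 v.2.2.2.1 +
    dot u.2.2.2.2 v.2.2.2.2

/-- `(x,y,σ,μ,λ) ∈ zer T` for the KKT operator `T`. -/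
def inZerT {N n m : ℕ} (Ω : Fin N → Set (Vec n)) (f : Fin N → Vec n → Vec n → ℝ)
    (A : Fin N → Matrix (Fin m) (Fin n) ℝ) (b : Fin N → Vec m)
    (x : VecN N n) (y : VecN N m) (σ μ : Vec n) (lam : Vec m) : Prop :=
  ∃ g ∈ Fe f x σ, ∃ uw ∈ nconeC (Cset Ω A b) (x, y), ∃ v ∈ normalCone (orthant m) lam,
    g + uw.1 - MavgT N μ = 0 ∧ uw.2 + PsumT N lam = 0 ∧ μ = 0 ∧ Mavg x - σ = 0 ∧
      v - Psum y = 0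

/-- Inner product on `ℝ^{nN} × ℝ^n`. -/
def ipXs {N n : ℕ} (p q : VecN N n × Vec n) : ℝ := dotN p.1 q.1 + dot p.2 q.2

/-- The extended pseudo-subdifferential map `(x,σ) ↦ F_e(x,σ) × {0}`. -/
def FeExt {N n : ℕ} (f : Fin N → Vec n → Vec n → ℝ) (p : VecN N n × Vec n) :
    Set (VecN N n × Vec n) :=
  {q | q.1 ∈ Fe f p.1 p.2 ∧ q.2 = 0}

/-- The operator `𝒜(x,y,σ,μ,λ) = (F_e(x,σ) + N_C(x,y)-part, 0, 0, 0)`. -/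
def Aop {N n m : ℕ} (Ω : Fin N → Set (Vec n)) (f : Fin N → Vec n → Vec n → ℝ)
    (A : Fin N → Matrix (Fin m) (Fin n) ℝ) (b : Fin N → Vec m) (ω : St N n m) :
    Set (St N n m) :=
  {t | ∃ g ∈ Fe f ω.1 ω.2.2.1, ∃ uw ∈ nconeC (Cset Ω A b) (ω.1, ω.2.1),
    t = (g + uw.1, uw.2, 0, 0, 0)}

/-- The skew-symmetric linear map `S`. -/
def Smap {N n m : ℕ} (ω : St N n m) : St N n m :=
  (-MavgT N ω.2.2.2.1, PsumT N ω.2.2.2.2, ω.2.2.2.1, Mavg ω.1 - ω.2.2.1, -Psum ω.2.1)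

/-- The operator `ℬ = S + (0,0,0,0, N_{ℝ^m_{≥0}})`. -/
def Bop {N n m : ℕ} (ω : St N n m) : Set (St N n m) :=
  {t | ∃ v ∈ normalCone (orthant m) ω.2.2.2.2, t = Smap ω + (0, 0, 0, 0, v)}

/-- The block-diagonal positive-definite step-size matrix `Γ` acting on the extended space. -/
def GammaMap {N n m : ℕ} (γ : Fin N → ℝ) (α β δ : ℝ) (ω : St N n m) : St N n m :=
  (fun i => γ i • ω.1 i, fun i => γ i • ω.2.1 i, α • ω.2.2.1, β • ω.2.2.2.1,
    δ • ω.2.2.2.2)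

/-- The local objective in the resolvent of `Γ𝒜`:
`v ↦ f_i(v, σ) + (1/(2γ_i))‖v − x_i‖² + (1/(2γ_i))‖A_i v − b_i − y_i‖²`,
with `(x, y, σ)` the corresponding components of `ω`. -/
def phiA {N n m : ℕ} (f : Fin N → Vec n → Vec n → ℝ)
    (A : Fin N → Matrix (Fin m) (Fin n) ℝ) (b : Fin N → Vec m) (γ : Fin N → ℝ)
    (ω : St N n m) (i : Fin N) (v : Vec n) : ℝ :=
  f i v ω.2.2.1 + (1 / (2 * γ i)) * dot (v - ω.1 i) (v - ω.1 i) +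
    (1 / (2 * γ i)) *
      dot ((A i).mulVec v - b i - ω.2.1 i) ((A i).mulVec v - b i - ω.2.1 i)


lemma dot_add_left {k} (a b c : Vec k) : dot (a + b) c = dot a c + dot b c := by
  simp [dot, add_mul, Finset.sum_add_distrib]

lemma dot_sub_left {k} (a b c : Vec k) : dot (a - b) c = dot a c - dot b c := by
  simp [dot, sub_mul, Finset.sum_sub_distrib]

lemma dot_comm {k} (a b : Vec k) : dot a b = dot b a := by
  simp [dot, mul_comm]

lemma dot_smul_left {k} (r : ℝ) (a b : Vec k) : dot (r • a) b = r * dot a b := by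
  simp [dot, Finset.mul_sum, mul_assoc]

lemma dot_nonneg_self {k} (a : Vec k) : 0 ≤ dot a a :=
  Finset.sum_nonneg fun j _ => mul_self_nonneg _

lemma eq_of_dot_self_nonpos {k} (a : Vec k) (h : dot a a ≤ 0) : a = 0 := by
  funext j
  have hj : a j * a j ≤ 0 := by
    have := Finset.single_le_sum (f := fun j => a j * a j)
      (fun i _ => mul_self_nonneg (a i)) (Finset.mem_univ j)
    have h0 := dot_nonneg_self a
    simp only [dot] at h h0
    linarith
  have := mul_self_nonneg (a j)
  have : a j * a j = 0 := le_antisymm hj this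
  simpa using mul_self_eq_zero.mp this

lemma dot_expand {k} (a d : Vec k) : dot (a + d) (a + d) = dot a a + 2 * dot a d + dot d d := by
  have : ∀ j : Fin k, (a j + d j) * (a j + d j) = a j * a j + 2 * (a j * d j) + d j * d j := by
    intro j; ring
  simp [dot, this, Finset.sum_add_distrib, Finset.mul_sum]

lemma dot_mulVec {m n : ℕ} (A : Matrix (Fin m) (Fin n) ℝ) (w : Vec m) (d : Vec n) :
    dot w (A.mulVec d) = dot (fun j => ∑ k, A k j * w k) d := by
  simp only [dot, Matrix.mulVec, dotProduct, Finset.mul_sum, Finset.sum_mul]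
  rw [Finset.sum_comm]
  congr 1; ext j; congr 1; ext k; ring

lemma mulVec_addv {m n : ℕ} (A : Matrix (Fin m) (Fin n) ℝ) (u v : Vec n) :
    A.mulVec (u + v) = A.mulVec u + A.mulVec v := A.mulVec_add u v

lemma mulVec_smulv {m n : ℕ} (A : Matrix (Fin m) (Fin n) ℝ) (r : ℝ) (v : Vec n) :
    A.mulVec (r • v) = r • A.mulVec v := by
  exact A.mulVec_smul r v

lemma le_of_eps {a b : ℝ} (h : ∀ ε > 0, a < b + ε) : a ≤ b := by
  by_contra hc
  push_neg at hc
  have := h ((a - b) / 2) (by linarith)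
  linarith

lemma key_sep {p : ℕ} (h : Vec p → ℝ) (hconv : ConvexOn ℝ Set.univ h)
    (hcont : Continuous h) (Ω : Set (Vec p)) (hΩconv : Convex ℝ Ω)
    (x0 : Vec p) (hx0 : x0 ∈ Ω) (hmin : ∀ z ∈ Ω, h x0 ≤ h z) :
    ∃ v : Vec p, (∀ z, h x0 + dot v (z - x0) ≤ h z) ∧ (∀ z ∈ Ω, 0 ≤ dot v (z - x0)) := by
  classical
  set E := (Vec p) × ℝ
  set s : Set E := {q | h q.1 - h x0 < q.2} with hs_def
  set t : Set E := Ω ×ˢ Set.Iic (0 : ℝ) with ht_def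
  have hsopen : IsOpen s := by
    have : Continuous fun q : E => q.2 - (h q.1 - h x0) :=
      continuous_snd.sub ((hcont.comp continuous_fst).sub continuous_const)
    have : IsOpen {q : E | 0 < q.2 - (h q.1 - h x0)} := isOpen_lt continuous_const this
    convert this using 1
    ext q; simp only [hs_def, Set.mem_setOf_eq]; constructor <;> intro <;> linarith
  have hsconv : Convex ℝ s := by
    intro q1 hq1 q2 hq2 a b ha hb hab
    simp only [hs_def, Set.mem_setOf_eq] at *
    have := hconv.2 (Set.mem_univ q1.1) (Set.mem_univ q2.1) ha hb hab
    simp only [smul_eq_mul] at this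
    have h2 : (a • q1 + b • q2).2 = a * q1.2 + b * q2.2 := rfl
    have h1 : (a • q1 + b • q2).1 = a • q1.1 + b • q2.1 := rfl
    rw [h1, h2]
    have hX : a * h x0 + b * h x0 = h x0 := by rw [← add_mul, hab, one_mul]
    rcases eq_or_lt_of_le ha with rfl | ha'
    · have hb1 : b = 1 := by linarith
      subst hb1
      simp only [zero_smul, zero_add, one_smul, zero_mul, one_mul] at this ⊢
      linarith
    · have s1 : a * (h q1.1 - h x0) < a * q1.2 := mul_lt_mul_of_pos_left hq1 ha'
      have s2 : b * (h q2.1 - h x0) ≤ b * q2.2 := mul_le_mul_of_nonneg_left (le_of_lt hq2) hb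
      nlinarith
  have htconv : Convex ℝ t := hΩconv.prod (convex_Iic 0)
  have hdisj : Disjoint s t := by
    rw [Set.disjoint_left]
    rintro q hq ⟨hq1, hq2⟩
    simp only [hs_def, Set.mem_setOf_eq] at hq
    have := hmin q.1 hq1
    simp only [Set.mem_Iic] at hq2
    linarith
  obtain ⟨φ, u, hsu, htu⟩ := geometric_hahn_banach_open hsconv hsopen htconv hdisj
  set r : ℝ := φ (0, 1) with hr_def
  set pv : Vec p → ℝ := fun z => φ (z, 0) with hpv_def
  have hpv_lin : ∀ (z : Vec p) (c : ℝ), φ (z, c) = pv z + c * r := by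
    intro z c
    have : (z, c) = ((z, 0) : E) + c • ((0 : Vec p), (1:ℝ)) := by
      simp [Prod.ext_iff]
    rw [this, map_add, _root_.map_smul]
    simp [hpv_def, hr_def, smul_eq_mul]
  have hpv_add : ∀ z w : Vec p, pv (z + w) = pv z + pv w := by
    intro z w
    have : ((z + w, 0) : E) = (z, 0) + (w, 0) := by simp [Prod.ext_iff]
    simp only [hpv_def]; rw [this, map_add]
  have hpv_sub : ∀ z w : Vec p, pv (z - w) = pv z - pv w := by
    intro z w
    have : ((z - w, 0) : E) = (z, 0) - (w, 0) := by simp [Prod.ext_iff]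
    simp only [hpv_def]; rw [this, map_sub]
  -- r < 0
  have hux0 : u ≤ pv x0 := by
    have : ((x0, 0) : E) ∈ t := Set.mk_mem_prod hx0 Set.self_mem_Iic
    simpa [hpv_def] using htu _ this
  have hrneg : r < 0 := by
    have h1 : ((x0, 1) : E) ∈ s := by rw [hs_def]; show h x0 - h x0 < 1; simp
    have := hsu _ h1
    rw [hpv_lin] at this
    linarith
  have hrpos : 0 < -r := by linarith
  set e : Fin p → Vec p := fun j => fun k => if j = k then 1 else 0 with he_def
  have hpv_repr : ∀ z : Vec p, pv z = ∑ j, z j * pv (e j) := by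
    intro z
    set L : Vec p →L[ℝ] ℝ := φ.comp (ContinuousLinearMap.inl ℝ (Vec p) ℝ) with hL
    have hLpv : ∀ w : Vec p, pv w = L w := by
      intro w
      simp only [hL, hpv_def, ContinuousLinearMap.comp_apply]
      rw [ContinuousLinearMap.inl_apply]
    rw [hLpv]
    conv_lhs => rw [pi_eq_sum_univ z]
    rw [map_sum]
    congr 1; ext j
    rw [_root_.map_smul, smul_eq_mul, hLpv]
  set v : Vec p := fun j => pv (e j) / (-r) with hv_def
  have hdot : ∀ z : Vec p, dot v z = pv z / (-r) := by
    intro z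
    rw [hpv_repr z]
    simp only [dot, hv_def]
    rw [Finset.sum_div]
    congr 1; ext j; ring
  refine ⟨v, ?_, ?_⟩
  · intro z
    have key : ∀ ε > (0:ℝ), dot v (z - x0) < h z - h x0 + ε := by
      intro ε hε
      have hmem : ((z, h z - h x0 + ε) : E) ∈ s := by
        simp only [hs_def, Set.mem_setOf_eq]; show h z - h x0 < h z - h x0 + ε; linarith
      have h1 := hsu _ hmem
      rw [hpv_lin] at h1
      rw [hdot, hpv_sub, div_lt_iff₀ hrpos]
      nlinarith
    have := le_of_eps key
    linarith
  · intro z hz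
    have hzt : ((z, 0) : E) ∈ t := Set.mk_mem_prod hz Set.self_mem_Iic
    have huz : u ≤ pv z := by simpa [hpv_def] using htu _ hzt
    have hx0u : pv x0 ≤ u := by
      apply le_of_eps
      intro ε hε
      have hmem : ((x0, ε / (-r)) : E) ∈ s := by
        simp only [hs_def, Set.mem_setOf_eq]
        have : 0 < ε / (-r) := div_pos hε hrpos
        show h x0 - h x0 < ε / (-r)
        linarith
      have h1 := hsu _ hmem
      rw [hpv_lin] at h1
      have : ε / (-r) * r = -ε := by
          rw [div_mul_eq_mul_div, mul_div_assoc, div_neg, div_self hrneg.ne]; ring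
      linarith
    rw [hdot, hpv_sub]
    apply div_nonneg _ (le_of_lt hrpos)
    linarith

lemma dot_neg_left {k} (a b : Vec k) : dot (-a) b = -dot a b := by
  simp [dot, Finset.sum_neg_distrib]

lemma dot_zero_right {k} (a : Vec k) : dot a 0 = 0 := by simp [dot]

lemma dot_sub_right {k} (a b c : Vec k) : dot a (b - c) = dot a b - dot a c := by
  simp [dot, mul_sub, Finset.sum_sub_distrib]

lemma dot_expand_smul {k} (a d : Vec k) (t : ℝ) :
    dot (a + t • d) (a + t • d) = dot a a + 2 * t * dot a d + t ^ 2 * dot d d := by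
  have : ∀ j : Fin k, (a j + t * d j) * (a j + t * d j) =
      a j * a j + 2 * t * (a j * d j) + t ^ 2 * (d j * d j) := fun j => by ring
  simp [dot, this, Finset.sum_add_distrib, Finset.mul_sum]

lemma dot_mid {k} (a b : Vec k) :
    dot ((1/2 : ℝ) • a + (1/2 : ℝ) • b) ((1/2 : ℝ) • a + (1/2 : ℝ) • b) =
      (1/2) * dot a a + (1/2) * dot b b - (1/4) * dot (a - b) (a - b) := by
  have : ∀ j : Fin k, (1/2 * a j + 1/2 * b j) * (1/2 * a j + 1/2 * b j) =
      1/2 * (a j * a j) + 1/2 * (b j * b j) - 1/4 * ((a j - b j) * (a j - b j)) :=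
    fun j => by ring
  simp only [dot, Pi.add_apply, Pi.smul_apply, smul_eq_mul, Pi.sub_apply,
    Finset.mul_sum]
  rw [Finset.sum_congr rfl fun j _ => this j, Finset.sum_sub_distrib,
    Finset.sum_add_distrib]

lemma mulVec_subv {m n : ℕ} (A : Matrix (Fin m) (Fin n) ℝ) (u v : Vec n) :
    A.mulVec (u - v) = A.mulVec u - A.mulVec v := by
  have h := mulVec_addv A (u - v) v
  simp only [sub_add_cancel] at h
  rw [h]; abel

/-- The per-block objective. -/
noncomputable def phi0 {n m : ℕ} (f0 : Vec n → ℝ) (A : Matrix (Fin m) (Fin n) ℝ) (b : Vec m)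
    (x : Vec n) (y : Vec m) (γ : ℝ) (v : Vec n) : ℝ :=
  f0 v + (1 / (2 * γ)) * dot (v - x) (v - x) +
    (1 / (2 * γ)) * dot (A.mulVec v - b - y) (A.mulVec v - b - y)

/-- Forward: resolvent inclusion data implies minimality. -/
lemma blockF {n m : ℕ} (f0 : Vec n → ℝ) (A : Matrix (Fin m) (Fin n) ℝ) (b : Vec m)
    (x : Vec n) (y : Vec m) (γ : ℝ) (hγ : 0 < γ) (Ω : Set (Vec n))
    (xp g u : Vec n) (w : Vec m)
    (hg : ∀ z, f0 xp + dot g (z - xp) ≤ f0 z)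
    (hxu : x - xp = γ • (g + u))
    (hyw : y - (A.mulVec xp - b) = γ • w)
    (hnc : ∀ z ∈ Ω, dot u (z - xp) + dot w (A.mulVec z - A.mulVec xp) ≤ 0) :
    ∀ z ∈ Ω, phi0 f0 A b x y γ xp ≤ phi0 f0 A b x y γ z := by
  intro z hz
  have hd : z = (z - xp) + xp := by abel
  set d : Vec n := z - xp with hd_def
  -- quadratic expansions
  have q1 : dot (z - x) (z - x) =
      dot (xp - x) (xp - x) + 2 * dot (xp - x) d + dot d d := by
    have : z - x = (xp - x) + d := by rw [hd_def]; abel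
    rw [this, dot_expand]
  have hAd : A.mulVec z = A.mulVec xp + A.mulVec d := by
    conv_lhs => rw [hd]
    rw [mulVec_addv]; abel
  have q2 : dot (A.mulVec z - b - y) (A.mulVec z - b - y) =
      dot (A.mulVec xp - b - y) (A.mulVec xp - b - y) +
        2 * dot (A.mulVec xp - b - y) (A.mulVec d) + dot (A.mulVec d) (A.mulVec d) := by
    have : A.mulVec z - b - y = (A.mulVec xp - b - y) + A.mulVec d := by
      rw [hAd]; abel
    rw [this, dot_expand]
  -- dot products with d
  have e1 : dot (xp - x) d = -(γ * (dot g d + dot u d)) := by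
    have h1 : xp - x = -(γ • (g + u)) := by rw [← hxu]; abel
    rw [h1, dot_neg_left, dot_smul_left, dot_add_left]
  have e2 : dot (A.mulVec xp - b - y) (A.mulVec d) = -(γ * dot w (A.mulVec d)) := by
    have h1 : A.mulVec xp - b - y = -(γ • w) := by rw [← hyw]; abel
    rw [h1, dot_neg_left, dot_smul_left]
  have h3 : A.mulVec z - A.mulVec xp = A.mulVec d := by rw [hAd]; abel
  have hnc' : dot u d + dot w (A.mulVec d) ≤ 0 := by
    have h4 := hnc z hz
    rw [h3] at h4
    rwa [← hd_def] at h4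
  have hsub := hg z
  have hDnn := dot_nonneg_self d
  have hD2nn := dot_nonneg_self (A.mulVec d)
  have hcpos : (0:ℝ) < 1 / (2 * γ) := by positivity
  have key1 : (1 / (2 * γ)) * (2 * dot (xp - x) d) = -(dot g d + dot u d) := by
    rw [e1]; field_simp
  have key2 : (1 / (2 * γ)) * (2 * dot (A.mulVec xp - b - y) (A.mulVec d)) =
      -dot w (A.mulVec d) := by
    rw [e2]; field_simp
  have hq1' : (1 / (2 * γ)) * dot (z - x) (z - x) =
      (1 / (2 * γ)) * dot (xp - x) (xp - x) + (1 / (2 * γ)) * (2 * dot (xp - x) d) +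
        (1 / (2 * γ)) * dot d d := by rw [q1]; ring
  have hq2' : (1 / (2 * γ)) * dot (A.mulVec z - b - y) (A.mulVec z - b - y) =
      (1 / (2 * γ)) * dot (A.mulVec xp - b - y) (A.mulVec xp - b - y) +
        (1 / (2 * γ)) * (2 * dot (A.mulVec xp - b - y) (A.mulVec d)) +
        (1 / (2 * γ)) * dot (A.mulVec d) (A.mulVec d) := by rw [q2]; ring
  have t1 : 0 ≤ (1 / (2 * γ)) * dot d d := mul_nonneg hcpos.le hDnn
  have t2 : 0 ≤ (1 / (2 * γ)) * dot (A.mulVec d) (A.mulVec d) :=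
    mul_nonneg hcpos.le hD2nn
  simp only [phi0]
  linarith

/-- Strict convexity: minimizers of `phi0` are unique. -/
lemma blockU {n m : ℕ} (f0 : Vec n → ℝ) (hf0conv : ConvexOn ℝ Set.univ f0)
    (A : Matrix (Fin m) (Fin n) ℝ) (b : Vec m) (x : Vec n) (y : Vec m) (γ : ℝ)
    (hγ : 0 < γ) (Ω : Set (Vec n)) (hΩconv : Convex ℝ Ω) (v w : Vec n)
    (hv : v ∈ Ω) (hw : w ∈ Ω)
    (hminv : ∀ z ∈ Ω, phi0 f0 A b x y γ v ≤ phi0 f0 A b x y γ z)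
    (hminw : ∀ z ∈ Ω, phi0 f0 A b x y γ w ≤ phi0 f0 A b x y γ z) : v = w := by
  set mid : Vec n := (1/2 : ℝ) • v + (1/2 : ℝ) • w with hmid_def
  have hmidΩ : mid ∈ Ω := hΩconv hv hw (by norm_num) (by norm_num) (by norm_num)
  have hf : f0 mid ≤ (1/2) * f0 v + (1/2) * f0 w := by
    have h := hf0conv.2 (Set.mem_univ v) (Set.mem_univ w)
      (by norm_num : (0:ℝ) ≤ 1/2) (by norm_num : (0:ℝ) ≤ 1/2) (by norm_num)
    rw [hmid_def]
    simpa [smul_eq_mul] using h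
  have hq1 : dot (mid - x) (mid - x) =
      (1/2) * dot (v - x) (v - x) + (1/2) * dot (w - x) (w - x) -
        (1/4) * dot ((v - x) - (w - x)) ((v - x) - (w - x)) := by
    have : mid - x = (1/2 : ℝ) • (v - x) + (1/2 : ℝ) • (w - x) := by
      funext j
      simp [hmid_def, Pi.sub_apply, Pi.add_apply, Pi.smul_apply, smul_eq_mul]
      ring
    rw [this, dot_mid]
  have hvw : (v - x) - (w - x) = v - w := by abel
  have hq2 : dot (A.mulVec mid - b - y) (A.mulVec mid - b - y) ≤
      (1/2) * dot (A.mulVec v - b - y) (A.mulVec v - b - y) +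
        (1/2) * dot (A.mulVec w - b - y) (A.mulVec w - b - y) := by
    have hm : A.mulVec mid - b - y =
        (1/2 : ℝ) • (A.mulVec v - b - y) + (1/2 : ℝ) • (A.mulVec w - b - y) := by
      rw [hmid_def, mulVec_addv, mulVec_smulv, mulVec_smulv]
      funext j
      simp [Pi.sub_apply, Pi.add_apply, Pi.smul_apply, smul_eq_mul]
      ring
    rw [hm, dot_mid]
    have := dot_nonneg_self ((A.mulVec v - b - y) - (A.mulVec w - b - y))
    linarith
  have hcpos : (0:ℝ) < 1 / (2 * γ) := by positivity
  have hkey : phi0 f0 A b x y γ mid ≤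
      (1/2) * phi0 f0 A b x y γ v + (1/2) * phi0 f0 A b x y γ w -
        (1 / (2 * γ)) * ((1/4) * dot (v - w) (v - w)) := by
    simp only [phi0]
    rw [hvw] at hq1
    nlinarith [mul_le_mul_of_nonneg_left hq2 hcpos.le]
  have h1 := hminv mid hmidΩ
  have h2 := hminv w hw
  have h3 := hminw v hv
  have hD : dot (v - w) (v - w) ≤ 0 := by nlinarith
  have := eq_of_dot_self_nonpos _ hD
  have := sub_eq_zero.mp this
  exact this

/-- Continuity of `phi0`. -/
lemma continuous_dot_pair {k n : ℕ} {F G : Vec n → Vec k} (hF : Continuous F)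
    (hG : Continuous G) : Continuous fun v => dot (F v) (G v) := by
  simp only [dot]
  exact continuous_finset_sum _ fun j _ =>
    ((continuous_apply j).comp hF).mul ((continuous_apply j).comp hG)

lemma continuous_mulVec' {m n : ℕ} (A : Matrix (Fin m) (Fin n) ℝ) :
    Continuous fun v : Vec n => A.mulVec v := by
  apply continuous_pi
  intro i
  simp only [Matrix.mulVec, dotProduct]
  exact continuous_finset_sum _ fun k _ => continuous_const.mul (continuous_apply k)

lemma blockE {n m : ℕ} (f0 : Vec n → ℝ) (hf0cont : Continuous f0)
    (A : Matrix (Fin m) (Fin n) ℝ) (b : Vec m) (x : Vec n) (y : Vec m) (γ : ℝ)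
    (Ω : Set (Vec n)) (hΩcp : IsCompact Ω) (hΩne : Ω.Nonempty) :
    ∃ xp ∈ Ω, ∀ z ∈ Ω, phi0 f0 A b x y γ xp ≤ phi0 f0 A b x y γ z := by
  have hφ : Continuous (phi0 f0 A b x y γ) := by
    apply Continuous.add
    apply Continuous.add hf0cont
    · exact continuous_const.mul (continuous_dot_pair
        (continuous_id.sub continuous_const) (continuous_id.sub continuous_const))
    · exact continuous_const.mul (continuous_dot_pair
        (((continuous_mulVec' A).sub continuous_const).sub continuous_const)
        (((continuous_mulVec' A).sub continuous_const).sub continuous_const))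
  obtain ⟨xp, hxp, hmin⟩ := hΩcp.exists_isMinOn hΩne hφ.continuousOn
  exact ⟨xp, hxp, fun z hz => hmin hz⟩

/-- Transpose action. -/
noncomputable def At {m n : ℕ} (A : Matrix (Fin m) (Fin n) ℝ) (w : Vec m) : Vec n :=
  fun j => ∑ k, A k j * w k

lemma dot_mulVec' {m n : ℕ} (A : Matrix (Fin m) (Fin n) ℝ) (w : Vec m) (d : Vec n) :
    dot w (A.mulVec d) = dot (At A w) d := dot_mulVec A w d

/-- Converse: minimality yields the resolvent inclusion data. -/
lemma blockB {n m : ℕ} (f0 : Vec n → ℝ) (hf0conv : ConvexOn ℝ Set.univ f0)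
    (hf0cont : Continuous f0) (A : Matrix (Fin m) (Fin n) ℝ) (b : Vec m)
    (x : Vec n) (y : Vec m) (γ : ℝ) (hγ : 0 < γ) (Ω : Set (Vec n))
    (hΩconv : Convex ℝ Ω) (xp : Vec n) (hxp : xp ∈ Ω)
    (hmin : ∀ z ∈ Ω, phi0 f0 A b x y γ xp ≤ phi0 f0 A b x y γ z) :
    ∃ g u : Vec n, ∃ w : Vec m,
      (∀ z, f0 xp + dot g (z - xp) ≤ f0 z) ∧ x - xp = γ • (g + u) ∧
        y - (A.mulVec xp - b) = γ • w ∧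
        ∀ z ∈ Ω, dot u (z - xp) + dot w (A.mulVec z - A.mulVec xp) ≤ 0 := by
  set c : Vec n := (1/γ) • ((xp - x) + At A (A.mulVec xp - b - y)) with hc_def
  -- Step 1: linearized optimality over Ω
  have hlin : ∀ z ∈ Ω, f0 xp + dot c xp ≤ f0 z + dot c z := by
    intro z hz
    set d : Vec n := z - xp with hd_def
    set E : ℝ := (f0 z - f0 xp) + dot c d with hE_def
    set K : ℝ := (1 / (2 * γ)) * (dot d d + dot (A.mulVec d) (A.mulVec d)) with hK_def
    have hKnn : 0 ≤ K := by
      have := dot_nonneg_self d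
      have := dot_nonneg_self (A.mulVec d)
      have : (0:ℝ) ≤ 1 / (2*γ) := by positivity
      positivity
    have hstep : ∀ t : ℝ, 0 < t → t ≤ 1 → 0 ≤ E + t * K := by
      intro t ht ht1
      set zt : Vec n := xp + t • d with hzt_def
      have hztΩ : zt ∈ Ω := by
        have heq : zt = (1 - t) • xp + t • z := by
          funext j
          simp [hzt_def, hd_def, Pi.add_apply, Pi.smul_apply, smul_eq_mul,
            Pi.sub_apply]
          ring
        rw [heq]
        exact hΩconv hxp hz (by linarith : (0:ℝ) ≤ 1 - t) ht.le (by ring)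
      have hφ := hmin zt hztΩ
      have hf : f0 zt ≤ (1 - t) * f0 xp + t * f0 z := by
        have heq : zt = (1 - t) • xp + t • z := by
          funext j
          simp [hzt_def, hd_def, Pi.add_apply, Pi.smul_apply, smul_eq_mul,
            Pi.sub_apply]
          ring
        rw [heq]
        have := hf0conv.2 (Set.mem_univ xp) (Set.mem_univ z)
          (by linarith : (0:ℝ) ≤ 1 - t) ht.le (by ring)
        simpa [smul_eq_mul] using this
      have hq1 : dot (zt - x) (zt - x) =
          dot (xp - x) (xp - x) + 2 * t * dot (xp - x) d + t ^ 2 * dot d d := by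
        have : zt - x = (xp - x) + t • d := by rw [hzt_def]; abel
        rw [this, dot_expand_smul]
      have hq2 : dot (A.mulVec zt - b - y) (A.mulVec zt - b - y) =
          dot (A.mulVec xp - b - y) (A.mulVec xp - b - y) +
            2 * t * dot (A.mulVec xp - b - y) (A.mulVec d) +
            t ^ 2 * dot (A.mulVec d) (A.mulVec d) := by
        have h1 : A.mulVec zt = A.mulVec xp + t • A.mulVec d := by
          rw [hzt_def, mulVec_addv, mulVec_smulv]
        have : A.mulVec zt - b - y = (A.mulVec xp - b - y) + t • A.mulVec d := by
          rw [h1]; abel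
        rw [this, dot_expand_smul]
      have hcd : dot c d =
          (1/γ) * (dot (xp - x) d + dot (A.mulVec xp - b - y) (A.mulVec d)) := by
        rw [hc_def, dot_smul_left, dot_add_left, dot_mulVec']
      simp only [phi0] at hφ
      rw [hq1, hq2] at hφ
      -- hφ : f0 xp + c0*Q + c0*R ≤ f0 zt + c0*(Q + 2t T1 + t² D) + c0*(R + 2t T2 + t² D2)
      have hc0 : (1 / (2*γ)) * (2 * t * dot (xp - x) d) = t * ((1/γ) * dot (xp - x) d) := by
        field_simp
      have hc0' : (1 / (2*γ)) * (2 * t * dot (A.mulVec xp - b - y) (A.mulVec d)) =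
          t * ((1/γ) * dot (A.mulVec xp - b - y) (A.mulVec d)) := by
        field_simp
      have hEexp : t * E = t * (f0 z - f0 xp) + t * dot c d := by ring
      -- conclude 0 ≤ t * (E + t * K), then divide by t
      have hmain : 0 ≤ t * (E + t * K) := by
        rw [hE_def, hK_def, hcd]
        nlinarith [hφ, hf]
      nlinarith [hmain, ht]
    -- from ∀ t ∈ (0,1], 0 ≤ E + t K, deduce 0 ≤ E
    have hE : 0 ≤ E := by
      by_contra hE
      push_neg at hE
      set t : ℝ := min 1 (-E / (K + 1)) with ht_def
      have hKp : 0 < K + 1 := by linarith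
      have htpos : 0 < t := lt_min one_pos (div_pos (by linarith) hKp)
      have ht1 : t ≤ 1 := min_le_left _ _
      have h2 := hstep t htpos ht1
      have htK : t * K ≤ (-E / (K + 1)) * K :=
        mul_le_mul_of_nonneg_right (min_le_right _ _) hKnn
      have hlt : (-E / (K + 1)) * K < -E := by
        rw [div_mul_eq_mul_div, div_lt_iff₀ hKp]
        nlinarith
      linarith
    have hcd2 : dot c d = dot c z - dot c xp := by rw [hd_def, dot_sub_right]
    rw [hE_def, hcd2] at hE
    linarith
  -- Step 2: separation
  set h : Vec n → ℝ := fun z => f0 z + dot c z with hh_def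
  have hhconv : ConvexOn ℝ Set.univ h := by
    refine hf0conv.add ⟨convex_univ, ?_⟩
    intro p _ q _ a b' ha hb' hab
    have : dot c (a • p + b' • q) = a * dot c p + b' * dot c q := by
      simp only [dot, Pi.add_apply, Pi.smul_apply, smul_eq_mul, Finset.mul_sum]
      rw [← Finset.sum_add_distrib]
      congr 1; ext j; ring
    rw [this]
    simp [smul_eq_mul]
  have hhcont : Continuous h := by
    have hdc : Continuous fun z : Vec n => dot c z :=
      continuous_finset_sum _ fun j _ => continuous_const.mul (continuous_apply j)
    exact hf0cont.add hdc
  have hhmin : ∀ z ∈ Ω, h xp ≤ h z := by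
    intro z hz
    have := hlin z hz
    simp only [hh_def]
    linarith
  obtain ⟨v, hv1, hv2⟩ := key_sep h hhconv hhcont Ω hΩconv xp hxp hhmin
  -- Step 3: assemble g, u, w
  refine ⟨v - c, (1/γ) • (x - xp) - (v - c), (1/γ) • (y - (A.mulVec xp - b)),
    ?_, ?_, ?_, ?_⟩
  · intro z
    have h1 := hv1 z
    have h2 : dot (v - c) (z - xp) = dot v (z - xp) - dot c (z - xp) := dot_sub_left _ _ _
    have h3 : dot c (z - xp) = dot c z - dot c xp := dot_sub_right _ _ _
    simp only [hh_def] at h1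
    linarith
  · funext j
    simp only [Pi.smul_apply, Pi.add_apply, Pi.sub_apply, smul_eq_mul]
    field_simp
    ring
  · funext j
    simp only [Pi.smul_apply, Pi.sub_apply, smul_eq_mul]
    field_simp
  · intro z hz
    have hAzxp : A.mulVec z - A.mulVec xp = A.mulVec (z - xp) := (mulVec_subv A z xp).symm
    rw [hAzxp, dot_mulVec']
    set d : Vec n := z - xp with hd_def
    -- u + At A w = -v
    have hkey : ∀ j, ((1/γ) • (x - xp) - (v - c)) j +
        At A ((1/γ) • (y - (A.mulVec xp - b))) j = -v j := by
      intro j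
      have hγ' : γ ≠ 0 := ne_of_gt hγ
      have hsplit : ∑ k, A k j * ((A.mulVec xp) k - b k - y k) +
          ∑ k, A k j * (y k - ((A.mulVec xp) k - b k)) = 0 := by
        rw [← Finset.sum_add_distrib]
        apply Finset.sum_eq_zero
        intro k _
        ring
      have hpull : ∑ k, A k j * (1/γ * (y k - ((A.mulVec xp) k - b k))) =
          1/γ * ∑ k, A k j * (y k - ((A.mulVec xp) k - b k)) := by
        rw [Finset.mul_sum]
        congr 1; ext k; ring
      simp only [hc_def, At, Pi.sub_apply, Pi.smul_apply, Pi.add_apply,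
        smul_eq_mul]
      rw [hpull]
      field_simp
      linear_combination hsplit
    have hsum : dot ((1/γ) • (x - xp) - (v - c)) d +
        dot (At A ((1/γ) • (y - (A.mulVec xp - b)))) d = dot (-v) d := by
      simp only [dot, ← Finset.sum_add_distrib]
      congr 1; ext j
      rw [← add_mul]
      rw [hkey j]
      simp
    rw [hsum, dot_neg_left]
    have := hv2 z hz
    rw [hd_def]
    linarith


/-- characterization of the resolvent of `Γ𝒜`, which is single-valued
with full domain. -/
theorem stmt5 {N n m : ℕ} (hN : 0 < N) (hn : 0 < n) (hm : 0 < m)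
    (Ω : Fin N → Set (Vec n)) (f : Fin N → Vec n → Vec n → ℝ)
    (A : Fin N → Matrix (Fin m) (Fin n) ℝ) (b : Fin N → Vec m)
    (hΩne : ∀ i, (Ω i).Nonempty) (hΩcp : ∀ i, IsCompact (Ω i))
    (hΩcv : ∀ i, Convex ℝ (Ω i))
    (hfcont : ∀ i, Continuous (fun p : Vec n × Vec n => f i p.1 p.2))
    (hfconv : ∀ i w, ConvexOn ℝ Set.univ (fun z => f i z w))
    (γ : Fin N → ℝ) (hγ : ∀ i, 0 < γ i) (α β δ : ℝ) (hα : 0 < α) (hβ : 0 < β)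
    (hδ : 0 < δ) :
    (∀ ω ωp : St N n m,
      ω - ωp ∈ GammaMap γ α β δ '' Aop Ω f A b ωp ↔
        ωp.2.2.1 = ω.2.2.1 ∧ ωp.2.2.2.1 = ω.2.2.2.1 ∧ ωp.2.2.2.2 = ω.2.2.2.2 ∧
          ∀ i,
            (ωp.1 i ∈ Ω i ∧ (∀ v ∈ Ω i, phiA f A b γ ω i (ωp.1 i) ≤ phiA f A b γ ω i v) ∧
              ∀ v ∈ Ω i, (∀ w ∈ Ω i, phiA f A b γ ω i v ≤ phiA f A b γ ω i w) →
                v = ωp.1 i) ∧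
            ωp.2.1 i = (A i).mulVec (ωp.1 i) - b i) ∧
    ∀ ω : St N n m, ∃! ωp : St N n m, ω - ωp ∈ GammaMap γ α β δ '' Aop Ω f A b ωp := by
  classical
  have hcont1 : ∀ (i : Fin N) (σ : Vec n), Continuous fun v => f i v σ := fun i σ =>
    (hfcont i).comp (continuous_id.prodMk continuous_const)
  have main : ∀ ω ωp : St N n m,
      ω - ωp ∈ GammaMap γ α β δ '' Aop Ω f A b ωp ↔
        ωp.2.2.1 = ω.2.2.1 ∧ ωp.2.2.2.1 = ω.2.2.2.1 ∧ ωp.2.2.2.2 = ω.2.2.2.2 ∧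
          ∀ i,
            (ωp.1 i ∈ Ω i ∧ (∀ v ∈ Ω i, phiA f A b γ ω i (ωp.1 i) ≤ phiA f A b γ ω i v) ∧
              ∀ v ∈ Ω i, (∀ w ∈ Ω i, phiA f A b γ ω i v ≤ phiA f A b γ ω i w) →
                v = ωp.1 i) ∧
            ωp.2.1 i = (A i).mulVec (ωp.1 i) - b i := by
    intro ω ωp
    constructor
    · rintro ⟨t, ⟨g, hg, uw, huw, rfl⟩, heq⟩
      have h1 : (fun i => γ i • (g + uw.1) i) = ω.1 - ωp.1 := congrArg Prod.fst heq
      have h2 : (fun i => γ i • uw.2 i) = ω.2.1 - ωp.2.1 :=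
        congrArg (fun p : St N n m => p.2.1) heq
      have h3 : α • (0 : Vec n) = ω.2.2.1 - ωp.2.2.1 :=
        congrArg (fun p : St N n m => p.2.2.1) heq
      have h4 : β • (0 : Vec n) = ω.2.2.2.1 - ωp.2.2.2.1 :=
        congrArg (fun p : St N n m => p.2.2.2.1) heq
      have h5 : δ • (0 : Vec m) = ω.2.2.2.2 - ωp.2.2.2.2 :=
        congrArg (fun p : St N n m => p.2.2.2.2) heq
      rw [smul_zero] at h3 h4 h5
      have hσ : ωp.2.2.1 = ω.2.2.1 := (sub_eq_zero.mp h3.symm).symm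
      have hμ : ωp.2.2.2.1 = ω.2.2.2.1 := (sub_eq_zero.mp h4.symm).symm
      have hlam : ωp.2.2.2.2 = ω.2.2.2.2 := (sub_eq_zero.mp h5.symm).symm
      have hC : ∀ i, ωp.1 i ∈ Ω i ∧ ωp.2.1 i = (A i).mulVec (ωp.1 i) - b i := huw.1
      refine ⟨hσ, hμ, hlam, fun i => ?_⟩
      have hxpΩ : ωp.1 i ∈ Ω i := (hC i).1
      have hyp : ωp.2.1 i = (A i).mulVec (ωp.1 i) - b i := (hC i).2
      have hnci : ∀ z ∈ Ω i, dot (uw.1 i) (z - ωp.1 i) +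
          dot (uw.2 i) ((A i).mulVec z - (A i).mulVec (ωp.1 i)) ≤ 0 := by
        intro z hz
        set q1 : VecN N n := Function.update ωp.1 i z with hq1
        set q2 : VecN N m := Function.update ωp.2.1 i ((A i).mulVec z - b i) with hq2
        have hqC : (q1, q2) ∈ Cset Ω A b := by
          intro i'
          by_cases hii : i' = i
          · subst hii
            refine ⟨?_, ?_⟩
            · rw [hq1]; simpa [Function.update_self] using hz
            · rw [hq1, hq2]; simp [Function.update_self]
          · refine ⟨?_, ?_⟩
            · rw [hq1]; simpa [Function.update_of_ne hii] using (hC i').1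
            · rw [hq1, hq2]; simpa [Function.update_of_ne hii] using (hC i').2
        have hle := huw.2 (q1, q2) hqC
        simp only [ip2, dotN, Prod.fst_sub, Prod.snd_sub, Pi.sub_apply] at hle
        have E1 : (∑ i', dot (uw.1 i') (q1 i' - ωp.1 i')) =
            dot (uw.1 i) (q1 i - ωp.1 i) := by
          refine Finset.sum_eq_single_of_mem i (Finset.mem_univ i) fun i' _ hne => ?_
          have hz1 : q1 i' - ωp.1 i' = 0 := by
            rw [hq1, Function.update_of_ne hne, sub_self]
          rw [hz1, dot_zero_right]
        have E2 : (∑ i', dot (uw.2 i') (q2 i' - ωp.2.1 i')) =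
            dot (uw.2 i) (q2 i - ωp.2.1 i) := by
          refine Finset.sum_eq_single_of_mem i (Finset.mem_univ i) fun i' _ hne => ?_
          have hz2 : q2 i' - ωp.2.1 i' = 0 := by
            rw [hq2, Function.update_of_ne hne, sub_self]
          rw [hz2, dot_zero_right]
        rw [E1, E2] at hle
        have hv1 : q1 i - ωp.1 i = z - ωp.1 i := by
          rw [hq1, Function.update_self]
        have hv2 : q2 i - ωp.2.1 i = (A i).mulVec z - (A i).mulVec (ωp.1 i) := by
          rw [hq2, Function.update_self, hyp]; abel
        rw [hv1, hv2] at hle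
        exact hle
      have hgz : ∀ z, f i (ωp.1 i) ωp.2.2.1 + dot (g i) (z - ωp.1 i) ≤
          f i z ωp.2.2.1 := hg i
      rw [hσ] at hgz
      have hxu : ω.1 i - ωp.1 i = γ i • (g i + uw.1 i) := (congrFun h1 i).symm
      have hyw : ω.2.1 i - ((A i).mulVec (ωp.1 i) - b i) = γ i • uw.2 i := by
        rw [← hyp]
        exact (congrFun h2 i).symm
      have hmin := blockF (fun v => f i v ω.2.2.1) (A i) (b i) (ω.1 i) (ω.2.1 i)
        (γ i) (hγ i) (Ω i) (ωp.1 i) (g i) (uw.1 i) (uw.2 i) hgz hxu hyw hnci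
      refine ⟨⟨hxpΩ, hmin, ?_⟩, hyp⟩
      intro v hv hvmin
      exact blockU (fun z => f i z ω.2.2.1) (hfconv i ω.2.2.1) (A i) (b i) (ω.1 i)
        (ω.2.1 i) (γ i) (hγ i) (Ω i) (hΩcv i) v (ωp.1 i) hv hxpΩ hvmin hmin
    · rintro ⟨hσ, hμ, hlam, hbl⟩
      choose g u w hsub hxu hyw hnc using fun i =>
        blockB (fun v => f i v ω.2.2.1) (hfconv i ω.2.2.1) (hcont1 i ω.2.2.1)
          (A i) (b i) (ω.1 i) (ω.2.1 i) (γ i) (hγ i) (Ω i) (hΩcv i) (ωp.1 i)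
          ((hbl i).1.1) ((hbl i).1.2.1)
      refine ⟨(g + u, w, 0, 0, 0), ⟨g, ?_, (u, w), ⟨?_, ?_⟩, rfl⟩, ?_⟩
      · show ∀ i, g i ∈ subdiff (fun z => f i z ωp.2.2.1) (ωp.1 i)
        rw [hσ]
        exact fun i => hsub i
      · exact fun i => ⟨(hbl i).1.1, (hbl i).2⟩
      · intro q hq
        simp only [ip2, dotN, Prod.fst_sub, Prod.snd_sub, Pi.sub_apply]
        rw [← Finset.sum_add_distrib]
        apply Finset.sum_nonpos
        intro i _
        have h5 : q.2 i - ωp.2.1 i = (A i).mulVec (q.1 i) - (A i).mulVec (ωp.1 i) := by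
          rw [(hq i).2, (hbl i).2]; abel
        rw [h5]
        exact hnc i (q.1 i) (hq i).1
      · have e1 : (fun i => γ i • (g + u) i) = ω.1 - ωp.1 := by
          funext i
          exact (hxu i).symm
        have e2 : (fun i => γ i • w i) = ω.2.1 - ωp.2.1 := by
          funext i
          show γ i • w i = ω.2.1 i - ωp.2.1 i
          rw [(hbl i).2]
          exact (hyw i).symm
        have e3 : α • (0 : Vec n) = ω.2.2.1 - ωp.2.2.1 := by
          rw [smul_zero, hσ, sub_self]
        have e4 : β • (0 : Vec n) = ω.2.2.2.1 - ωp.2.2.2.1 := by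
          rw [smul_zero, hμ, sub_self]
        have e5 : δ • (0 : Vec m) = ω.2.2.2.2 - ωp.2.2.2.2 := by
          rw [smul_zero, hlam, sub_self]
        exact Prod.ext e1 (Prod.ext e2 (Prod.ext e3 (Prod.ext e4 e5)))
  refine ⟨main, ?_⟩
  intro ω
  choose xp hxpΩ hxpmin using fun i =>
    blockE (fun v => f i v ω.2.2.1) (hcont1 i ω.2.2.1) (A i) (b i) (ω.1 i) (ω.2.1 i)
      (γ i) (Ω i) (hΩcp i) (hΩne i)
  refine ⟨(xp, fun i => (A i).mulVec (xp i) - b i, ω.2.2.1, ω.2.2.2.1, ω.2.2.2.2),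
    (main ω _).mpr ⟨rfl, rfl, rfl, fun i => ⟨⟨hxpΩ i, hxpmin i, ?_⟩, rfl⟩⟩, ?_⟩
  · intro v hv hvmin
    exact blockU (fun z => f i z ω.2.2.1) (hfconv i ω.2.2.1) (A i) (b i) (ω.1 i)
      (ω.2.1 i) (γ i) (hγ i) (Ω i) (hΩcv i) v (xp i) hv (hxpΩ i) hvmin (hxpmin i)
  · intro ωp' h'
    rw [main ω ωp'] at h'
    obtain ⟨hσ', hμ', hlam', hbl'⟩ := h'
    have hx : ωp'.1 = xp := by
      funext i
      exact ((hbl' i).1.2.2 (xp i) (hxpΩ i) (hxpmin i)).symm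
    have hy : ωp'.2.1 = fun i => (A i).mulVec (xp i) - b i := by
      funext i
      rw [(hbl' i).2, congrFun hx i]
    exact Prod.ext hx (Prod.ext hy (Prod.ext hσ' (Prod.ext hμ' hlam')))
end
end

section
/- Let ω = (x,y,σ,μ,λ) ∈ ℝ^d and ω⁺ = (x⁺,y⁺,σ⁺,μ⁺,λ⁺) ∈ ℝ^d. Then ω − ω⁺ ∈ ΓB(ω⁺) (where ΓB(ω') := {Γa : a ∈ B(ω')}) if and only if μ⁺ = (N/((1+βα)N + βγ̂))·(μ + β(σ − M_n x)), λ⁺ = proj_{ℝ^m_{≥0}}((λ + δ P y)/(1 + δ N γ̂)), x⁺ = x + Γ_x M_n^⊤ μ⁺, y⁺ = y − Γ_y P^⊤ λ⁺, and σ⁺ = σ − α μ⁺, where γ̂ := (1/N)Σ_i γ_i. In particular the resolvent (Id + ΓB)^{-1} is single-valued with full domain. -/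
noncomputable section

open Matrix Finset Filter

lemma projPos_char (t w a : ℝ) (ht : 0 < t) :
    (0 ≤ a ∧ t * (w - a) ≤ 0 ∧ t * (w - a) * a = 0) ↔ a = max w 0 := by
  constructor
  · rintro ⟨h0, h1, h2⟩
    have hwa : w ≤ a := by nlinarith
    rcases mul_eq_zero.mp h2 with h' | h'
    · have : w = a := by
        rcases mul_eq_zero.mp h' with h'' | h''
        · exact absurd h'' (ne_of_gt ht)
        · linarith
      rw [this, max_eq_left h0]
    · rw [h'] at hwa ⊢
      rw [max_eq_right hwa]
  · rintro rfl
    refine ⟨le_max_right _ _, ?_, ?_⟩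
    · rcases le_total w 0 with h | h
      · rw [max_eq_right h]; nlinarith
      · rw [max_eq_left h]; simp
    · rcases le_total w 0 with h | h
      · rw [max_eq_right h]; ring
      · rw [max_eq_left h]; ring

lemma mem_ncone_orthant {m : ℕ} (l v : Vec m) :
    v ∈ normalCone (orthant m) l ↔ (∀ j, 0 ≤ l j) ∧ ∀ j, v j ≤ 0 ∧ v j * l j = 0 := by
  constructor
  · rintro ⟨hl, h⟩
    refine ⟨hl, fun j => ?_⟩
    have h1 := h (Function.update l j (l j + 1)) (fun k => by
      rcases eq_or_ne k j with rfl | hk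
      · simp; linarith [hl k]
      · simp [Function.update_of_ne hk]; exact hl k)
    have h2 := h (Function.update l j 0) (fun k => by
      rcases eq_or_ne k j with rfl | hk
      · simp
      · simp [Function.update_of_ne hk]; exact hl k)
    have e1 : dot v (Function.update l j (l j + 1) - l) = v j := by
      rw [dot, Finset.sum_eq_single j]
      · simp
      · intro k _ hk; simp [Function.update_of_ne hk]
      · intro hj; exact absurd (Finset.mem_univ j) hj
    have e2 : dot v (Function.update l j 0 - l) = -(v j * l j) := by
      rw [dot, Finset.sum_eq_single j]
      · simp
      · intro k _ hk; simp [Function.update_of_ne hk]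
      · intro hj; exact absurd (Finset.mem_univ j) hj
    rw [e1] at h1
    rw [e2] at h2
    constructor
    · exact h1
    · have : v j * l j ≤ 0 := mul_nonpos_of_nonpos_of_nonneg h1 (hl j)
      linarith
  · rintro ⟨hl, h⟩
    refine ⟨hl, fun z hz => ?_⟩
    rw [dot]
    apply Finset.sum_nonpos
    intro k _
    have := h k
    have hzk := hz k
    simp only [Pi.sub_apply]
    nlinarith [this.1, this.2]

lemma key {N n m : ℕ} (hN : 0 < N) (γ : Fin N → ℝ) (hγ : ∀ i, 0 < γ i)
    (α β δ : ℝ) (hα : 0 < α) (hβ : 0 < β) (hδ : 0 < δ) (ω ωp : St N n m) :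
    ω - ωp ∈ GammaMap γ α β δ '' Bop ωp ↔
      (ωp.2.2.2.1 = ((N : ℝ) / ((1 + β * α) * N + β * ((N : ℝ)⁻¹ * ∑ i, γ i))) •
            (ω.2.2.2.1 + β • (ω.2.2.1 - Mavg ω.1)) ∧
        ωp.2.2.2.2 =
          projPos ((1 + δ * N * ((N : ℝ)⁻¹ * ∑ i, γ i))⁻¹ •
            (ω.2.2.2.2 + δ • Psum ω.2.1)) ∧
        ωp.1 = (fun i => ω.1 i + γ i • ((N : ℝ)⁻¹ • ωp.2.2.2.1)) ∧
        ωp.2.1 = (fun i => ω.2.1 i - γ i • ωp.2.2.2.2) ∧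
        ωp.2.2.1 = ω.2.2.1 - α • ωp.2.2.2.1) := by
  obtain ⟨x, y, s, u, l⟩ := ω
  obtain ⟨a, b, c, d, e⟩ := ωp
  have hNr : (0:ℝ) < (N:ℝ) := by exact_mod_cast hN
  have hNr' : ((N:ℝ)) ≠ 0 := ne_of_gt hNr
  have hG : (0:ℝ) < ∑ i, γ i := Finset.sum_pos (fun i _ => hγ i) ⟨⟨0, hN⟩, Finset.mem_univ _⟩
  have hC : (0:ℝ) < (1 + β*α) + β * (((N:ℝ))⁻¹ * ∑ i, γ i) * ((N:ℝ))⁻¹ := by positivity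
  have hND : (N:ℝ) / ((1 + β * α) * N + β * ((N:ℝ)⁻¹ * ∑ i, γ i)) =
      ((1 + β*α) + β * (((N:ℝ))⁻¹ * ∑ i, γ i) * ((N:ℝ))⁻¹)⁻¹ := by
    rw [div_eq_iff (by positivity)]
    field_simp
  have hKrw : (1:ℝ) + δ * (N:ℝ) * ((N:ℝ)⁻¹ * ∑ i, γ i) = 1 + δ * ∑ i, γ i := by
    field_simp
  constructor
  · rintro ⟨t, ⟨v, hv, rfl⟩, heq⟩
    simp only [GammaMap, Smap, MavgT, PsumT, Prod.mk_add_mk, Prod.mk_sub_mk, Prod.mk.injEq,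
      add_zero, zero_add, Pi.add_apply, Pi.neg_apply, Pi.zero_apply] at heq
    obtain ⟨h1, h2, h3, h4, h5⟩ := heq
    dsimp only at hv ⊢
    have hR3 : a = fun i => x i + γ i • ((N:ℝ)⁻¹ • d) := by
      funext i j
      have h := congrFun (congrFun h1 i) j
      simp only [Pi.sub_apply, Pi.smul_apply, Pi.neg_apply, smul_eq_mul, Pi.add_apply] at h ⊢
      linear_combination h
    have hR4 : b = fun i => y i - γ i • e := by
      funext i j
      have h := congrFun (congrFun h2 i) j
      simp only [Pi.sub_apply, Pi.smul_apply, smul_eq_mul] at h ⊢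
      linear_combination h
    have hR5 : c = s - α • d := by
      funext j
      have h := congrFun h3 j
      simp only [Pi.sub_apply, Pi.smul_apply, smul_eq_mul] at h ⊢
      linear_combination h
    subst hR3 hR4 hR5
    refine ⟨?_, ?_, rfl, rfl, rfl⟩
    · funext j
      have h := congrFun h4 j
      simp only [Pi.smul_apply, Pi.sub_apply, Pi.add_apply, smul_eq_mul, Mavg,
        Finset.sum_apply] at h ⊢
      rw [Finset.sum_add_distrib, ← Finset.sum_mul] at h
      have h' : d j * ((1 + β*α) + β * (((N:ℝ))⁻¹ * ∑ i, γ i) * ((N:ℝ))⁻¹) =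
          u j + β * (s j - (N:ℝ)⁻¹ * ∑ i, x i j) := by linear_combination h
      rw [hND, inv_mul_eq_div, eq_div_iff (ne_of_gt hC)]
      linear_combination h'
    · rw [mem_ncone_orthant] at hv
      obtain ⟨he0, hve⟩ := hv
      funext j
      have hk : (0:ℝ) < 1 + δ * (N:ℝ) * ((N:ℝ)⁻¹ * ∑ i, γ i) := by positivity
      simp only [projPos, Pi.smul_apply, Pi.add_apply, smul_eq_mul, Psum, Finset.sum_apply]
      have h5j := congrFun h5 j
      simp only [Pi.smul_apply, Pi.add_apply, Pi.neg_apply, Pi.sub_apply, smul_eq_mul, Psum,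
        Finset.sum_apply] at h5j
      rw [Finset.sum_sub_distrib, ← Finset.sum_mul] at h5j
      have htw : (δ⁻¹ * (1 + δ * (N:ℝ) * ((N:ℝ)⁻¹ * ∑ i, γ i))) *
          (((1 + δ * (N:ℝ) * ((N:ℝ)⁻¹ * ∑ i, γ i))⁻¹ * (l j + δ * ∑ i, y i j)) - e j) = v j := by
        rw [hKrw]
        have h1δG : (0:ℝ) < 1 + δ * ∑ i, γ i := by positivity
        field_simp
        linear_combination (-(1:ℝ)) * h5j
      refine (projPos_char (δ⁻¹ * (1 + δ * (N:ℝ) * ((N:ℝ)⁻¹ * ∑ i, γ i)))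
        ((1 + δ * (N:ℝ) * ((N:ℝ)⁻¹ * ∑ i, γ i))⁻¹ * (l j + δ * ∑ i, y i j)) (e j)
        (by positivity)).mp ⟨he0 j, ?_, ?_⟩
      · rw [htw]; exact (hve j).1
      · rw [htw]; exact (hve j).2
  · rintro ⟨hd, he, ha, hb, hc⟩
    dsimp only at hd he ha hb hc ⊢
    subst ha hb hc
    set v : Vec m := fun j => δ⁻¹ * (l j - e j) + (∑ i, y i j) - (∑ i, γ i) * e j with hvdef
    have hvj : ∀ j, v j = δ⁻¹ * (l j - e j) + (∑ i, y i j) - (∑ i, γ i) * e j := fun j => rfl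
    have htw : ∀ j, (δ⁻¹ * (1 + δ * (N:ℝ) * ((N:ℝ)⁻¹ * ∑ i, γ i))) *
        (((1 + δ * (N:ℝ) * ((N:ℝ)⁻¹ * ∑ i, γ i))⁻¹ * (l j + δ * ∑ i, y i j)) - e j) = v j := by
      intro j
      rw [hvj j, hKrw]
      field_simp
      ring
    have hej : ∀ j, e j = max ((1 + δ * (N:ℝ) * ((N:ℝ)⁻¹ * ∑ i, γ i))⁻¹ *
        (l j + δ * ∑ i, y i j)) 0 := by
      intro j
      rw [he]
      simp [projPos, Psum, Finset.sum_apply]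
    refine ⟨_, ⟨v, ?_, rfl⟩, ?_⟩
    · rw [mem_ncone_orthant]
      refine ⟨fun j => ?_, fun j => ?_⟩
      · show (0:ℝ) ≤ e j
        rw [hej j]; exact le_max_right _ _
      · obtain ⟨h0, hle, hz⟩ := (projPos_char (δ⁻¹ * (1 + δ * (N:ℝ) * ((N:ℝ)⁻¹ * ∑ i, γ i)))
          ((1 + δ * (N:ℝ) * ((N:ℝ)⁻¹ * ∑ i, γ i))⁻¹ * (l j + δ * ∑ i, y i j)) (e j)
          (by positivity)).mpr (hej j)
        rw [htw j] at hle hz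
        exact ⟨hle, hz⟩
    · simp only [GammaMap, Smap, MavgT, PsumT, Prod.mk_add_mk, Prod.mk_sub_mk, Prod.mk.injEq,
        add_zero, zero_add, Pi.add_apply, Pi.neg_apply, Pi.zero_apply]
      refine ⟨?_, ?_, ?_, ?_, ?_⟩
      · funext i j
        simp only [Pi.sub_apply, Pi.smul_apply, Pi.neg_apply, smul_eq_mul, Pi.add_apply]
        ring
      · funext i j
        simp only [Pi.sub_apply, Pi.smul_apply, smul_eq_mul]
        ring
      · funext j
        simp only [Pi.sub_apply, Pi.smul_apply, smul_eq_mul]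
        ring
      · funext j
        have hdj := congrFun hd j
        simp only [Pi.smul_apply, Pi.sub_apply, Pi.add_apply, smul_eq_mul, Mavg,
          Finset.sum_apply] at hdj ⊢
        rw [Finset.sum_add_distrib, ← Finset.sum_mul]
        rw [hND, inv_mul_eq_div, eq_div_iff (ne_of_gt hC)] at hdj
        linear_combination hdj
      · funext j
        simp only [Pi.smul_apply, Pi.add_apply, Pi.neg_apply, Pi.sub_apply, smul_eq_mul, Psum,
          Finset.sum_apply]
        rw [Finset.sum_sub_distrib, ← Finset.sum_mul, hvj j]
        field_simp
        ring

/-- explicit characterization of the resolvent of `Γℬ`, which is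
single-valued with full domain (here `γ̂ = (1/N) Σ_i γ_i`). -/
theorem stmt6 {N n m : ℕ} (hN : 0 < N) (hn : 0 < n) (hm : 0 < m)
    (γ : Fin N → ℝ) (hγ : ∀ i, 0 < γ i) (α β δ : ℝ) (hα : 0 < α) (hβ : 0 < β)
    (hδ : 0 < δ) :
    (∀ ω ωp : St N n m,
      ω - ωp ∈ GammaMap γ α β δ '' Bop ωp ↔
        ωp.2.2.2.1 = ((N : ℝ) / ((1 + β * α) * N + β * ((N : ℝ)⁻¹ * ∑ i, γ i))) •
            (ω.2.2.2.1 + β • (ω.2.2.1 - Mavg ω.1)) ∧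
        ωp.2.2.2.2 =
          projPos ((1 + δ * N * ((N : ℝ)⁻¹ * ∑ i, γ i))⁻¹ •
            (ω.2.2.2.2 + δ • Psum ω.2.1)) ∧
        ωp.1 = (fun i => ω.1 i + γ i • ((N : ℝ)⁻¹ • ωp.2.2.2.1)) ∧
        ωp.2.1 = (fun i => ω.2.1 i - γ i • ωp.2.2.2.2) ∧
        ωp.2.2.1 = ω.2.2.1 - α • ωp.2.2.2.1) ∧
    ∀ ω : St N n m, ∃! ωp : St N n m, ω - ωp ∈ GammaMap γ α β δ '' Bop ωp := by
  refine ⟨fun ω ωp => key hN γ hγ α β δ hα hβ hδ ω ωp, fun ω => ?_⟩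
  obtain ⟨x, y, s, u, l⟩ := ω
  refine ⟨(fun i => x i + γ i • ((N:ℝ)⁻¹ •
      (((N:ℝ) / ((1 + β * α) * N + β * ((N:ℝ)⁻¹ * ∑ i, γ i))) • (u + β • (s - Mavg x)))),
    fun i => y i - γ i • projPos ((1 + δ * N * ((N:ℝ)⁻¹ * ∑ i, γ i))⁻¹ • (l + δ • Psum y)),
    s - α • (((N:ℝ) / ((1 + β * α) * N + β * ((N:ℝ)⁻¹ * ∑ i, γ i))) • (u + β • (s - Mavg x))),
    ((N:ℝ) / ((1 + β * α) * N + β * ((N:ℝ)⁻¹ * ∑ i, γ i))) • (u + β • (s - Mavg x)),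
    projPos ((1 + δ * N * ((N:ℝ)⁻¹ * ∑ i, γ i))⁻¹ • (l + δ • Psum y))), ?_, ?_⟩
  · exact (key hN γ hγ α β δ hα hβ hδ _ _).mpr ⟨rfl, rfl, rfl, rfl, rfl⟩
  · intro ωp hp
    obtain ⟨a, b, c, d, e⟩ := ωp
    obtain ⟨p1, p2, p3, p4, p5⟩ := (key hN γ hγ α β δ hα hβ hδ _ _).mp hp
    dsimp only at p1 p2 p3 p4 p5
    subst p1 p2 p3 p4 p5
    rfl
end
end

section
/- A point (x, y, σ, μ, λ) ∈ ℝ^d belongs to zer T if and only if all of the following hold: μ = 0_n; σ = M_n x; for every i, x_i ∈ Ω_i, y_i = A_i x_i − b_i, and 0 ∈ ∂[f_i(·, M_n x)](x_i) + N_{Ω_i}(x_i) + A_i^⊤λ; and λ ∈ ℝ^m_{≥0}, A x − b ≤ 0 componentwise, and ⟨λ, A x − b⟩ = 0. -/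
noncomputable section

open Matrix Finset Filter

/-! The equations of `0 ∈ T ω` force `μ = 0`, `σ = M_n x`, `u = -g`, `w_i = -λ` and `v = P y = A x - b`.
What is left are the two normal-cone conditions: since `C` is a product of graphs of the affine
maps `x_i ↦ A_i x_i - b_i` over `Ω_i`, `(u, w) ∈ N_C(x, y)` splits into `u_i + A_iᵀ w_i ∈ N_{Ω_i}(x_i)`,
and `v ∈ N_{ℝ^m_{≥0}}(λ)` is complementarity `λ ≥ 0`, `v ≤ 0`, `⟨v, λ⟩ = 0`. -/

lemma dot_eq_dotProduct {k : ℕ} (u v : Vec k) : dot u v = u ⬝ᵥ v := rfl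

lemma mem_normalCone_orthant {m : ℕ} {v lam : Vec m} :
    v ∈ normalCone (orthant m) lam ↔ (∀ j, 0 ≤ lam j) ∧ (∀ j, v j ≤ 0) ∧ v ⬝ᵥ lam = 0 := by
  simp only [normalCone, orthant, Set.mem_ofPred_eq, dot_eq_dotProduct, dotProduct_sub]
  refine and_congr_right fun hlam => ⟨fun h => ⟨fun j => ?_, ?_⟩, fun ⟨hv, hvlam⟩ z hz => ?_⟩
  · let e : Vec m := Pi.single j 1
    have hz : ∀ k, 0 ≤ (lam + e) k := fun k => by
      rcases eq_or_ne k j with rfl | hk <;> simp [e, *, add_nonneg]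
    simpa [e, dotProduct_add, dotProduct_single] using h (lam + e) hz
  · have h0 := h 0 fun _ => le_rfl
    have h2 := h (2 • lam) fun k => by simpa using mul_nonneg zero_le_two (hlam k)
    simp only [dotProduct_zero, two_smul, dotProduct_add] at h0 h2
    linarith
  · rw [hvlam, sub_zero]
    exact Finset.sum_nonpos fun k _ => mul_nonpos_of_nonpos_of_nonneg (hv k) (hz k)

lemma MavgT_zero (N : ℕ) {k : ℕ} : MavgT N (0 : Vec k) = 0 := by
  funext
  simp [MavgT]

section Cset

variable {N n m : ℕ} {Ω : Fin N → Set (Vec n)} {A : Fin N → Matrix (Fin m) (Fin n) ℝ}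
  {b : Fin N → Vec m}

lemma ip2_sub_of_mem_Cset {p q : VecN N n × VecN N m} (hp : p ∈ Cset Ω A b)
    (hq : q ∈ Cset Ω A b) (uw : VecN N n × VecN N m) :
    ip2 uw (q - p) = ∑ i, (uw.1 i + (A i)ᵀ *ᵥ uw.2 i) ⬝ᵥ (q.1 i - p.1 i) := by
  simp only [ip2, dotN, dot_eq_dotProduct, ← Finset.sum_add_distrib]
  refine Finset.sum_congr rfl fun i _ => ?_
  have hw : q.2 i - p.2 i = A i *ᵥ (q.1 i - p.1 i) := by
    rw [(hq i).2, (hp i).2, Matrix.mulVec_sub]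
    abel
  rw [Prod.fst_sub, Prod.snd_sub, Pi.sub_apply, Pi.sub_apply, hw, add_dotProduct,
    Matrix.dotProduct_mulVec, Matrix.mulVec_transpose]

lemma update_mem_Cset {p : VecN N n × VecN N m} (hp : p ∈ Cset Ω A b) {i : Fin N} {z : Vec n}
    (hz : z ∈ Ω i) :
    (Function.update p.1 i z, Function.update p.2 i (A i *ᵥ z - b i)) ∈ Cset Ω A b := by
  intro j
  rcases eq_or_ne j i with rfl | hj
  · simpa using hz
  · simpa [hj] using hp j

lemma mem_nconeC_Cset_iff {p uw : VecN N n × VecN N m} :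
    uw ∈ nconeC (Cset Ω A b) p ↔
      p ∈ Cset Ω A b ∧ ∀ i, uw.1 i + (A i)ᵀ *ᵥ uw.2 i ∈ normalCone (Ω i) (p.1 i) := by
  refine and_congr_right fun hp => ⟨fun h i => ⟨(hp i).1, fun z hz => ?_⟩, fun h q hq => ?_⟩
  · have hq := update_mem_Cset hp hz
    have := h _ hq
    rw [ip2_sub_of_mem_Cset hp hq, Finset.sum_eq_single i (fun j _ hj => by simp [hj])
      (by simp)] at this
    simpa [dot_eq_dotProduct] using this
  · rw [ip2_sub_of_mem_Cset hp hq]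
    exact Finset.sum_nonpos fun i _ => (h i).2 _ (hq i).1

lemma Psum_eq_bigA_sub {x : VecN N n} {y : VecN N m} (hxy : (x, y) ∈ Cset Ω A b) :
    Psum y = bigA A x - ∑ i, b i := by
  rw [Psum, bigA, ← Finset.sum_sub_distrib]
  exact Finset.sum_congr rfl fun i _ => (hxy i).2

end Cset

theorem stmt13_general {N n m : ℕ}
    (Ω : Fin N → Set (Vec n)) (f : Fin N → Vec n → Vec n → ℝ)
    (A : Fin N → Matrix (Fin m) (Fin n) ℝ) (b : Fin N → Vec m)
    (x : VecN N n) (y : VecN N m) (σ μ : Vec n) (lam : Vec m) :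
    inZerT Ω f A b x y σ μ lam ↔
      μ = 0 ∧ σ = Mavg x ∧
      (∀ i, x i ∈ Ω i ∧ y i = (A i).mulVec (x i) - b i ∧
        ∃ g ∈ subdiff (fun z => f i z (Mavg x)) (x i), ∃ u ∈ normalCone (Ω i) (x i),
          g + u + (A i)ᵀ.mulVec lam = 0) ∧
      (∀ j, 0 ≤ lam j) ∧ (∀ j, bigA A x j ≤ (∑ i, b i) j) ∧
      dot lam (bigA A x - ∑ i, b i) = 0 := by
  simp only [inZerT, mem_nconeC_Cset_iff, mem_normalCone_orthant, sub_eq_zero]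
  constructor
  · rintro ⟨g, hg, uw, ⟨hxy, hnormal⟩, v, ⟨hlam, hv, hvlam⟩, hgu, hwlam, rfl, rfl, rfl⟩
    have hu : uw.1 = -g := eq_neg_of_add_eq_zero_right (by rwa [MavgT_zero] at hgu)
    have hw : ∀ i, uw.2 i = -lam := fun i => eq_neg_of_add_eq_zero_left (congrFun hwlam i)
    rw [Psum_eq_bigA_sub hxy] at hv hvlam
    refine ⟨rfl, rfl, fun i => ⟨(hxy i).1, (hxy i).2, g i, hg i, _, hnormal i, ?_⟩, hlam,
      fun j => sub_nonpos.1 (hv j), by rwa [dot_eq_dotProduct, dotProduct_comm]⟩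
    rw [hu, hw, Matrix.mulVec_neg, Pi.neg_apply]
    abel
  · rintro ⟨rfl, rfl, hlocal, hlam, hfeas, hcompl⟩
    choose g hg u hu hgu using fun i => (hlocal i).2.2
    have hxy : (x, y) ∈ Cset Ω A b := fun i => ⟨(hlocal i).1, (hlocal i).2.1⟩
    refine ⟨g, hg, (-g, PsumT N (-lam)), ⟨hxy, fun i => ?_⟩, _, ⟨hlam, fun j => ?_, ?_⟩,
      by rw [MavgT_zero, add_neg_cancel], by funext; simp [PsumT], rfl, rfl,
      (Psum_eq_bigA_sub hxy).symm⟩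
    · convert hu i using 1
      simp only [Pi.neg_apply, PsumT, Matrix.mulVec_neg]
      linear_combination -(hgu i)
    · exact sub_nonpos.2 (hfeas j)
    · rwa [dotProduct_comm, ← dot_eq_dotProduct]

/-- full characterization of `zer T`: `μ = 0`, `σ = M_n x`, local KKT
stationarity of each agent, and complementarity of `λ` with the coupling constraint. -/
theorem stmt13 {N n m : ℕ} (hN : 0 < N) (hn : 0 < n) (hm : 0 < m)
    (Ω : Fin N → Set (Vec n)) (f : Fin N → Vec n → Vec n → ℝ)
    (A : Fin N → Matrix (Fin m) (Fin n) ℝ) (b : Fin N → Vec m)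
    (hΩne : ∀ i, (Ω i).Nonempty) (hΩcp : ∀ i, IsCompact (Ω i))
    (hΩcv : ∀ i, Convex ℝ (Ω i))
    (hfcont : ∀ i, Continuous (fun p : Vec n × Vec n => f i p.1 p.2))
    (hfconv : ∀ i w, ConvexOn ℝ Set.univ (fun z => f i z w))
    (x : VecN N n) (y : VecN N m) (σ μ : Vec n) (lam : Vec m) :
    inZerT Ω f A b x y σ μ lam ↔
      μ = 0 ∧ σ = Mavg x ∧
      (∀ i, x i ∈ Ω i ∧ y i = (A i).mulVec (x i) - b i ∧
        ∃ g ∈ subdiff (fun z => f i z (Mavg x)) (x i), ∃ u ∈ normalCone (Ω i) (x i),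
          g + u + (A i)ᵀ.mulVec lam = 0) ∧
      (∀ j, 0 ≤ lam j) ∧ (∀ j, bigA A x j ≤ (∑ i, b i) j) ∧
      dot lam (bigA A x - ∑ i, b i) = 0 :=
  stmt13_general Ω f A b x y σ μ lam
end
end

section
/- If x̄ solves GVI(𝒳, F_a), i.e., x̄ ∈ 𝒳 and there exists ḡ ∈ F_a(x̄) with ⟨ḡ, x − x̄⟩ ≥ 0 for all x ∈ 𝒳, then x̄ is a generalized aggregative equilibrium: x̄ ∈ 𝒳 and, for every i and every z ∈ X_i(x̄_{−i}) := {z ∈ Ω_i : A_i z − b_i ≤ Σ_{j≠i}(b_j − A_j x̄_j)}, it holds that f_i(x̄_i, M_n x̄) ≤ f_i(z, M_n x̄). -/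
noncomputable section

open Matrix Finset Filter

/-! Moving only player `i` from `x̄ i` to `z` keeps the profile in `𝒳` precisely because `z`
satisfies player `i`'s residual coupling constraint, so the GVI gives `⟨ḡ i, z - x̄ i⟩ ≥ 0`.
Since `ḡ i` is a subgradient of `f i · (M x̄)` at `x̄ i`, with the aggregate frozen at `M x̄`,
this is exactly `f i (x̄ i) (M x̄) ≤ f i z (M x̄)`. -/

theorem le_of_mem_subdiff_of_nonneg_dot {p : ℕ} {φ : Vec p → ℝ} {x z v : Vec p}
    (hv : v ∈ subdiff φ x) (hz : 0 ≤ dot v (z - x)) : φ x ≤ φ z := by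
  linarith [hv z]

theorem dotN_update_sub {N k : ℕ} (g x : VecN N k) (i : Fin N) (z : Vec k) :
    dotN g (Function.update x i z - x) = dot (g i) (z - x i) := by
  rw [dotN, Finset.sum_eq_single i]
  · simp
  · intro k _ hk
    simp [Function.update_of_ne hk, dot]
  · simp

theorem bigA_update_sub_sum {N n m : ℕ} (A : Fin N → Matrix (Fin m) (Fin n) ℝ)
    (b : Fin N → Vec m) (x : VecN N n) (i : Fin N) (z : Vec n) :
    bigA A (Function.update x i z) - ∑ k, b k =
      ((A i).mulVec z - b i) - ∑ k ∈ Finset.univ.erase i, (b k - (A k).mulVec (x k)) := by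
  have hothers : ∑ k ∈ Finset.univ.erase i, (A k).mulVec (Function.update x i z k) =
      ∑ k ∈ Finset.univ.erase i, (A k).mulVec (x k) :=
    Finset.sum_congr rfl fun k hk => by rw [Function.update_of_ne (Finset.ne_of_mem_erase hk)]
  rw [bigA, ← Finset.add_sum_erase _ _ (Finset.mem_univ i), Function.update_self, hothers,
    ← Finset.add_sum_erase _ b (Finset.mem_univ i), Finset.sum_sub_distrib]
  abel

theorem update_mem_Xfeas {N n m : ℕ} {Ω : Fin N → Set (Vec n)}
    {A : Fin N → Matrix (Fin m) (Fin n) ℝ} {b : Fin N → Vec m} {x : VecN N n}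
    (hx : x ∈ Xfeas Ω A b) {i : Fin N} {z : Vec n} (hzΩ : z ∈ Ω i)
    (hz : ∀ j, ((A i).mulVec z - b i) j ≤
      (∑ k ∈ Finset.univ.erase i, (b k - (A k).mulVec (x k))) j) :
    Function.update x i z ∈ Xfeas Ω A b := by
  refine ⟨fun k => ?_, fun j => ?_⟩
  · rcases eq_or_ne k i with rfl | hk
    · simpa using hzΩ
    · simpa [Function.update_of_ne hk] using hx.1 k
  · have h := congrFun (bigA_update_sub_sum A b x i z) j
    have hzj := hz j
    simp only [Pi.sub_apply] at h hzj
    linarith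

theorem stmt16_general {N n m : ℕ}
    (Ω : Fin N → Set (Vec n)) (f : Fin N → Vec n → Vec n → ℝ)
    (A : Fin N → Matrix (Fin m) (Fin n) ℝ) (b : Fin N → Vec m)
    (xbar : VecN N n)
    (hGVI : xbar ∈ Xfeas Ω A b ∧
      ∃ g ∈ Fa f xbar, ∀ x ∈ Xfeas Ω A b, 0 ≤ dotN g (x - xbar)) :
    xbar ∈ Xfeas Ω A b ∧
      ∀ i, ∀ z ∈ Ω i,
        (∀ j, ((A i).mulVec z - b i) j ≤
            (∑ jj ∈ Finset.univ.erase i, (b jj - (A jj).mulVec (xbar jj))) j) →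
          f i (xbar i) (Mavg xbar) ≤ f i z (Mavg xbar) := by
  obtain ⟨hfeas, g, hg, hvi⟩ := hGVI
  refine ⟨hfeas, fun i z hzΩ hz => ?_⟩
  have hdeviation := hvi _ (update_mem_Xfeas hfeas hzΩ hz)
  rw [dotN_update_sub] at hdeviation
  exact le_of_mem_subdiff_of_nonneg_dot (hg i) hdeviation

/-- every solution of GVI(𝒳, F_a) is a generalized aggregative
equilibrium. -/
theorem stmt16 {N n m : ℕ} (hN : 0 < N) (hn : 0 < n) (hm : 0 < m)
    (Ω : Fin N → Set (Vec n)) (f : Fin N → Vec n → Vec n → ℝ)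
    (A : Fin N → Matrix (Fin m) (Fin n) ℝ) (b : Fin N → Vec m)
    (hΩne : ∀ i, (Ω i).Nonempty) (hΩcp : ∀ i, IsCompact (Ω i))
    (hΩcv : ∀ i, Convex ℝ (Ω i))
    (hfcont : ∀ i, Continuous (fun p : Vec n × Vec n => f i p.1 p.2))
    (hfconv : ∀ i w, ConvexOn ℝ Set.univ (fun z => f i z w))
    (xbar : VecN N n)
    (hGVI : xbar ∈ Xfeas Ω A b ∧
      ∃ g ∈ Fa f xbar, ∀ x ∈ Xfeas Ω A b, 0 ≤ dotN g (x - xbar)) :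
    xbar ∈ Xfeas Ω A b ∧
      ∀ i, ∀ z ∈ Ω i,
        (∀ j, ((A i).mulVec z - b i) j ≤
            (∑ jj ∈ Finset.univ.erase i, (b jj - (A jj).mulVec (xbar jj))) j) →
          f i (xbar i) (Mavg xbar) ≤ f i z (Mavg xbar) :=
  stmt16_general Ω f A b xbar hGVI
end
end
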